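/- arXiv:1411.7323 — 10 statements merged into one kernel-verified Lean document; each statement's English description precedes it below -/
import Mathlib

section
/- If η(ω)f(ω) > 0 on a set of positive μ-measure, then the function g : [0,1] → ℝ defined by g(x) = ∫_Ω q(ω) f(ω) (β(ω)x + η(ω))/(β(ω)x + η(ω) + γ(ω)) dμ(ω) − x has exactly one root in [0,1], and this root lies in the open interval (0,1). -/
/-!
Write `F x = ∫ q f φ_ω(x)` with `φ_ω(x) = (β x + η) / (β x + η + γ)`, so that the roots of `g`
are the fixed points of `F`. Each `φ_ω` is concave and nondecreasing on `[0, ∞)`, being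
`a ↦ a / (a + γ)` composed with a nonnegative affine map, and integrating against the nonnegative
weight `q f` preserves both properties. Moreover `F 0 > 0`, since the integrand is positive where
`η f > 0` and `q > 0`, and `F 1 < ∫ q f = 1`, since `φ_ω(1) < 1`. A concave nondecreasing function
on `[0, 1]` with `F 0 > 0` and `F 1 < 1` has exactly one fixed point: one exists by the
intermediate value theorem, and if `x < y` were both fixed, the chord from `(0, F 0)` to `(y, y)`
would force `F x > x`.
-/

open MeasureTheory Set

section Saturation

variable {γ : ℝ}

lemma concaveOn_div_add_const (hγ : 0 < γ) : ConcaveOn ℝ (Ici 0) fun a : ℝ => a / (a + γ) := by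
  refine ⟨convex_Ici 0, fun u (hu : 0 ≤ u) v (hv : 0 ≤ v) s t hs ht hst => ?_⟩
  obtain rfl : s = 1 - t := by linarith
  simp only [smul_eq_mul]
  rw [← mul_div_assoc, ← mul_div_assoc, div_add_div _ _ (by positivity) (by positivity),
    div_le_div_iff₀ (by positivity) (by positivity)]
  nlinarith [mul_nonneg (mul_nonneg (mul_nonneg hs ht) hγ.le) (sq_nonneg (u - v))]

lemma monotoneOn_div_add_const (hγ : 0 < γ) : MonotoneOn (fun a : ℝ => a / (a + γ)) (Ici 0) := by
  intro u (hu : 0 ≤ u) v (hv : 0 ≤ v) huv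
  dsimp only
  rw [div_le_div_iff₀ (by positivity) (by positivity)]
  nlinarith

variable {β η : ℝ}

lemma concaveOn_affine_div_add_const (hβ : 0 ≤ β) (hη : 0 ≤ η) (hγ : 0 < γ) :
    ConcaveOn ℝ (Ici 0) fun x : ℝ => (β * x + η) / (β * x + η + γ) := by
  refine ⟨convex_Ici 0, fun x (hx : 0 ≤ x) y (hy : 0 ≤ y) s t hs ht hst => ?_⟩
  have h := (concaveOn_div_add_const hγ).2 (mem_Ici.2 (by positivity : 0 ≤ β * x + η))
    (mem_Ici.2 (by positivity : 0 ≤ β * y + η)) hs ht hst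
  have hmix : s • (β * x + η) + t • (β * y + η) = β * (s • x + t • y) + η := by
    simp only [smul_eq_mul]; linear_combination η * hst
  rwa [hmix] at h

lemma monotoneOn_affine_div_add_const (hβ : 0 ≤ β) (hη : 0 ≤ η) (hγ : 0 < γ) :
    MonotoneOn (fun x : ℝ => (β * x + η) / (β * x + η + γ)) (Ici 0) :=
  fun x (hx : 0 ≤ x) y (hy : 0 ≤ y) hxy =>
    monotoneOn_div_add_const hγ (mem_Ici.2 (by positivity)) (mem_Ici.2 (by positivity))
      (by gcongr)

lemma affine_div_add_const_nonneg (hβ : 0 ≤ β) (hη : 0 ≤ η) (hγ : 0 < γ) {x : ℝ} (hx : 0 ≤ x) :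
    0 ≤ (β * x + η) / (β * x + η + γ) := by
  positivity

lemma affine_div_add_const_lt_one (hβ : 0 ≤ β) (hη : 0 ≤ η) (hγ : 0 < γ) {x : ℝ} (hx : 0 ≤ x) :
    (β * x + η) / (β * x + η + γ) < 1 :=
  (div_lt_one (by positivity)).2 (lt_add_of_pos_right _ hγ)

end Saturation

section Integral

variable {Ω : Type*} [MeasurableSpace Ω] {μ : Measure Ω}

lemma concaveOn_integral {E : Type*} [AddCommGroup E] [Module ℝ E] {s : Set E}
    {k : E → Ω → ℝ} (hs : Convex ℝ s) (hk : ∀ᵐ ω ∂μ, ConcaveOn ℝ s (k · ω))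
    (hi : ∀ x ∈ s, Integrable (k x) μ) : ConcaveOn ℝ s fun x => ∫ ω, k x ω ∂μ := by
  refine ⟨hs, fun x hx y hy a b ha hb hab => ?_⟩
  simp only [smul_eq_mul]
  rw [← integral_const_mul, ← integral_const_mul,
    ← integral_add ((hi x hx).const_mul a) ((hi y hy).const_mul b)]
  exact integral_mono_ae (((hi x hx).const_mul a).add ((hi y hy).const_mul b))
    (hi _ (hs hx hy ha hb hab)) (hk.mono fun ω hω => hω.2 hx hy ha hb hab)

lemma monotoneOn_integral {α : Type*} [Preorder α] {s : Set α} {k : α → Ω → ℝ}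
    (hk : ∀ᵐ ω ∂μ, MonotoneOn (k · ω) s) (hi : ∀ x ∈ s, Integrable (k x) μ) :
    MonotoneOn (fun x => ∫ ω, k x ω ∂μ) s :=
  fun x hx y hy hxy => integral_mono_ae (hi x hx) (hi y hy) (hk.mono fun _ hω => hω hx hy hxy)

lemma integral_pos_of_ae_pos_on {h : Ω → ℝ} {s : Set Ω} (h0 : 0 ≤ᵐ[μ] h) (hi : Integrable h μ)
    (hs : 0 < μ s) (hpos : ∀ᵐ ω ∂μ, ω ∈ s → 0 < h ω) : 0 < ∫ ω, h ω ∂μ :=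
  (integral_pos_iff_support_of_nonneg_ae h0 hi).2 <|
    hs.trans_le <| measure_mono_ae <| hpos.mono fun _ hω hs => (hω hs).ne'

end Integral

section FixedPoint

variable {F : ℝ → ℝ}

lemma ConcaveOn.lt_apply_of_le_apply {s : Set ℝ} (hF : ConcaveOn ℝ s F) (h0 : 0 ∈ s)
    (hF0 : 0 < F 0) {x y : ℝ} (hy : y ∈ s) (hx : 0 ≤ x) (hxy : x < y) (hFy : y ≤ F y) :
    x < F x := by
  have hy0 : 0 < y := hx.trans_lt hxy
  set t := x / y
  have ht1 : t < 1 := (div_lt_one hy0).2 hxy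
  have hty : t * y = x := div_mul_cancel₀ x hy0.ne'
  have hchord := hF.2 h0 hy (sub_nonneg.2 ht1.le) (by positivity) (sub_add_cancel 1 t)
  simp only [smul_eq_mul, mul_zero, zero_add, hty] at hchord
  nlinarith [mul_le_mul_of_nonneg_left hFy (by positivity : 0 ≤ t)]

lemma ConcaveOn.exists_mem_Ioo_apply_eq_self (hF : ConcaveOn ℝ (Icc 0 1) F)
    (hmono : MonotoneOn F (Icc 0 1)) (hF0 : 0 < F 0) (hF1 : F 1 < 1) :
    ∃ x ∈ Ioo 0 1, F x = x := by
  have h01 : F 0 ≤ F 1 :=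
    hmono (left_mem_Icc.2 zero_le_one) (right_mem_Icc.2 zero_le_one) zero_le_one
  -- Concavity gives continuity only on `Ioo 0 1`, so monotonicity is used to find a sign change
  -- of `F x - x` strictly inside: `F` lies above the diagonal at `a` and below it at `b`.
  set a := F 0 / 2 with ha
  set b := (1 + F 1) / 2 with hb
  have hab : Icc a b ⊆ Ioo 0 1 := Icc_subset_Ioo (by positivity) (by linarith)
  have haI : a ∈ Icc 0 1 := ⟨by positivity, by linarith⟩
  have hbI : b ∈ Icc 0 1 := ⟨by linarith, by linarith⟩
  have hFa : F 0 ≤ F a := hmono (left_mem_Icc.2 zero_le_one) haI haI.1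
  have hFb : F b ≤ F 1 := hmono hbI (right_mem_Icc.2 zero_le_one) hbI.2
  have hcont : ContinuousOn (fun x => F x - x) (Icc a b) := by
    refine (hF.continuousOn_interior.mono ?_).sub continuousOn_id
    rwa [interior_Icc]
  obtain ⟨x, hx, hFx⟩ := intermediate_value_Icc' (by linarith) hcont
    (show (0 : ℝ) ∈ Icc (F b - b) (F a - a) from ⟨by linarith, by linarith⟩)
  exact ⟨x, hab hx, sub_eq_zero.1 hFx⟩

lemma ConcaveOn.existsUnique_mem_Ioo_apply_eq_self (hF : ConcaveOn ℝ (Icc 0 1) F)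
    (hmono : MonotoneOn F (Icc 0 1)) (hF0 : 0 < F 0) (hF1 : F 1 < 1) :
    ∃ x ∈ Ioo 0 1, F x = x ∧ ∀ y ∈ Icc 0 1, F y = y → y = x := by
  obtain ⟨x, hx, hFx⟩ := hF.exists_mem_Ioo_apply_eq_self hmono hF0 hF1
  have h0 : (0 : ℝ) ∈ Icc 0 1 := left_mem_Icc.2 zero_le_one
  refine ⟨x, hx, hFx, fun y hy hFy => ?_⟩
  rcases lt_trichotomy y x with hyx | rfl | hxy
  · exact absurd hFy (hF.lt_apply_of_le_apply h0 hF0 (Ioo_subset_Icc_self hx) hy.1 hyx hFx.ge).ne'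
  · rfl
  · exact absurd hFx (hF.lt_apply_of_le_apply h0 hF0 hy hx.1.le hxy hFy.ge).ne'

end FixedPoint

section Weighted

variable {Ω : Type*} [MeasurableSpace Ω] {μ : Measure Ω} {w β η γ : Ω → ℝ}

lemma integrable_mul_affine_div_add (hw : Integrable w μ) (hβm : Measurable β)
    (hηm : Measurable η) (hγm : Measurable γ) (hβ : ∀ ω, 0 ≤ β ω) (hη : ∀ ω, 0 ≤ η ω)
    (hγ : ∀ ω, 0 < γ ω) {x : ℝ} (hx : 0 ≤ x) :
    Integrable (fun ω => w ω * ((β ω * x + η ω) / (β ω * x + η ω + γ ω))) μ :=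
  hw.mul_bdd (Measurable.aestronglyMeasurable (by fun_prop)) (ae_of_all _ fun ω => by
    rw [Real.norm_of_nonneg (affine_div_add_const_nonneg (hβ ω) (hη ω) (hγ ω) hx)]
    exact (affine_div_add_const_lt_one (hβ ω) (hη ω) (hγ ω) hx).le)

lemma concaveOn_integral_mul_affine_div_add (hw0 : ∀ ω, 0 ≤ w ω) (hw : Integrable w μ)
    (hβm : Measurable β) (hηm : Measurable η) (hγm : Measurable γ) (hβ : ∀ ω, 0 ≤ β ω)
    (hη : ∀ ω, 0 ≤ η ω) (hγ : ∀ ω, 0 < γ ω) :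
    ConcaveOn ℝ (Ici 0) fun x => ∫ ω, w ω * ((β ω * x + η ω) / (β ω * x + η ω + γ ω)) ∂μ :=
  concaveOn_integral (convex_Ici 0)
    (ae_of_all _ fun ω => (concaveOn_affine_div_add_const (hβ ω) (hη ω) (hγ ω)).smul (hw0 ω))
    fun _ hx => integrable_mul_affine_div_add hw hβm hηm hγm hβ hη hγ hx

lemma monotoneOn_integral_mul_affine_div_add (hw0 : ∀ ω, 0 ≤ w ω) (hw : Integrable w μ)
    (hβm : Measurable β) (hηm : Measurable η) (hγm : Measurable γ) (hβ : ∀ ω, 0 ≤ β ω)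
    (hη : ∀ ω, 0 ≤ η ω) (hγ : ∀ ω, 0 < γ ω) :
    MonotoneOn (fun x => ∫ ω, w ω * ((β ω * x + η ω) / (β ω * x + η ω + γ ω)) ∂μ) (Ici 0) :=
  monotoneOn_integral
    (ae_of_all _ fun ω _ hx _ hy hxy => mul_le_mul_of_nonneg_left
      (monotoneOn_affine_div_add_const (hβ ω) (hη ω) (hγ ω) hx hy hxy) (hw0 ω))
    fun _ hx => integrable_mul_affine_div_add hw hβm hηm hγm hβ hη hγ hx

lemma integral_mul_affine_div_add_lt_integral (hw0 : ∀ ω, 0 ≤ w ω) (hw : Integrable w μ)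
    (hw_pos : 0 < ∫ ω, w ω ∂μ) (hβm : Measurable β) (hηm : Measurable η) (hγm : Measurable γ)
    (hβ : ∀ ω, 0 ≤ β ω) (hη : ∀ ω, 0 ≤ η ω) (hγ : ∀ ω, 0 < γ ω) {x : ℝ} (hx : 0 ≤ x) :
    ∫ ω, w ω * ((β ω * x + η ω) / (β ω * x + η ω + γ ω)) ∂μ < ∫ ω, w ω ∂μ := by
  have hi := integrable_mul_affine_div_add hw hβm hηm hγm hβ hη hγ hx
  have hlt (ω : Ω) := affine_div_add_const_lt_one (hβ ω) (hη ω) (hγ ω) hx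
  have hgap : 0 < ∫ ω, (w ω - w ω * ((β ω * x + η ω) / (β ω * x + η ω + γ ω))) ∂μ := by
    refine integral_pos_of_ae_pos_on (ae_of_all _ fun ω => ?_) (hw.sub hi)
      ((integral_pos_iff_support_of_nonneg hw0 hw).1 hw_pos) (ae_of_all _ fun ω hω => ?_)
    · exact sub_nonneg.2 (mul_le_of_le_one_right (hw0 ω) (hlt ω).le)
    · exact sub_pos.2 (mul_lt_of_lt_one_right ((hw0 ω).lt_of_ne' hω) (hlt ω))
  rwa [integral_sub hw hi, sub_pos] at hgap

end Weighted

theorem stmt_3_general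
    {Ω : Type*} [MeasurableSpace Ω] (μ : Measure Ω)
    (q β γ η f : Ω → ℝ)
    (hmβ : Measurable β) (hmγ : Measurable γ)
    (hmη : Measurable η)
    (h0q : ∀ ω, 0 ≤ q ω) (h0β : ∀ ω, 0 ≤ β ω)
    (h0η : ∀ ω, 0 ≤ η ω) (h0f : ∀ ω, 0 ≤ f ω)
    (hqfint : ∫ ω, q ω * f ω ∂μ = 1)
    (hqpos : ∀ᵐ ω ∂μ, 0 < q ω)
    (ε : ℝ) (hε : 0 < ε) (hγε : ∀ ω, ε ≤ γ ω)
    (g : ℝ → ℝ)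
    (hgdef : ∀ x, g x =
      (∫ ω, q ω * f ω * ((β ω * x + η ω) / (β ω * x + η ω + γ ω)) ∂μ) - x)
    (hηf : 0 < μ {ω | 0 < η ω * f ω}) :
    ∃ x ∈ Ioo (0:ℝ) 1, g x = 0 ∧ ∀ y ∈ Icc (0:ℝ) 1, g y = 0 → y = x := by
  set F : ℝ → ℝ := fun x => ∫ ω, q ω * f ω * ((β ω * x + η ω) / (β ω * x + η ω + γ ω)) ∂μ
  have hγ (ω : Ω) : 0 < γ ω := hε.trans_le (hγε ω)
  have hw0 (ω : Ω) : 0 ≤ q ω * f ω := mul_nonneg (h0q ω) (h0f ω)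
  have hw : Integrable (fun ω => q ω * f ω) μ := .of_integral_ne_zero (by simp [hqfint])
  have hconc : ConcaveOn ℝ (Icc 0 1) F :=
    (concaveOn_integral_mul_affine_div_add hw0 hw hmβ hmη hmγ h0β h0η hγ).subset
      Icc_subset_Ici_self (convex_Icc 0 1)
  have hmono : MonotoneOn F (Icc 0 1) :=
    (monotoneOn_integral_mul_affine_div_add hw0 hw hmβ hmη hmγ h0β h0η hγ).mono
      Icc_subset_Ici_self
  have hF1 : F 1 < 1 := by
    simpa only [hqfint] using integral_mul_affine_div_add_lt_integral hw0 hw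
      (hqfint ▸ one_pos) hmβ hmη hmγ h0β h0η hγ zero_le_one
  have hF0 : 0 < F 0 := by
    refine integral_pos_of_ae_pos_on (ae_of_all _ fun ω =>
        mul_nonneg (hw0 ω) (affine_div_add_const_nonneg (h0β ω) (h0η ω) (hγ ω) le_rfl))
      (integrable_mul_affine_div_add hw hmβ hmη hmγ h0β h0η hγ le_rfl) hηf ?_
    filter_upwards [hqpos] with ω hq hηfω
    have hη : 0 < η ω := pos_of_mul_pos_left hηfω (h0f ω)
    have hf : 0 < f ω := pos_of_mul_pos_right hηfω (h0η ω)
    exact mul_pos (mul_pos hq hf) (div_pos (by simpa using hη) (by simpa using add_pos hη (hγ ω)))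
  obtain ⟨x, hx, hFx, huniq⟩ := hconc.existsUnique_mem_Ioo_apply_eq_self hmono hF0 hF1
  refine ⟨x, hx, by rw [hgdef]; exact sub_eq_zero.2 hFx, fun y hy hgy => huniq y hy ?_⟩
  rwa [hgdef, sub_eq_zero] at hgy

/-- If `η f > 0` on a set of positive measure then `g` has exactly one root in
`[0,1]`, and it lies in `(0,1)`. -/
theorem stmt_3
    {Ω : Type*} [MeasurableSpace Ω] (μ : Measure Ω) [IsProbabilityMeasure μ]
    (q β γ η f : Ω → ℝ)
    (hmq : Measurable q) (hmβ : Measurable β) (hmγ : Measurable γ)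
    (hmη : Measurable η) (hmf : Measurable f)
    (h0q : ∀ ω, 0 ≤ q ω) (h0β : ∀ ω, 0 ≤ β ω) (h0γ : ∀ ω, 0 ≤ γ ω)
    (h0η : ∀ ω, 0 ≤ η ω) (h0f : ∀ ω, 0 ≤ f ω)
    (M : ℝ) (hbq : ∀ ω, q ω ≤ M) (hbβ : ∀ ω, β ω ≤ M) (hbγ : ∀ ω, γ ω ≤ M)
    (hbη : ∀ ω, η ω ≤ M) (hbf : ∀ ω, f ω ≤ M)
    (hfint : ∫ ω, f ω ∂μ = 1) (hqfint : ∫ ω, q ω * f ω ∂μ = 1)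
    (hqpos : ∀ᵐ ω ∂μ, 0 < q ω)
    (ε : ℝ) (hε : 0 < ε) (hβε : ∀ ω, ε ≤ β ω) (hγε : ∀ ω, ε ≤ γ ω)
    (g : ℝ → ℝ)
    (hgdef : ∀ x, g x =
      (∫ ω, q ω * f ω * ((β ω * x + η ω) / (β ω * x + η ω + γ ω)) ∂μ) - x)
    (hηf : 0 < μ {ω | 0 < η ω * f ω}) :
    ∃ x ∈ Ioo (0:ℝ) 1, g x = 0 ∧ ∀ y ∈ Icc (0:ℝ) 1, g y = 0 → y = x :=
  stmt_3_general μ q β γ η f hmβ hmγ hmη h0q h0β h0η h0f hqfint hqpos ε hε hγε g hgdef hηf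
end

section
/- If η(ω)f(ω) = 0 for μ-a.e. ω, then the function g : [0,1] → ℝ defined by g(x) = ∫_Ω q(ω) f(ω) (β(ω)x + η(ω))/(β(ω)x + η(ω) + γ(ω)) dμ(ω) − x satisfies g(0) = 0 and is differentiable at 0 with g'(0) = R₀ − 1, where R₀ = ∫_Ω q(ω) f(ω) β(ω)/γ(ω) dμ(ω). -/
/-!
Where `η f = 0` the integrand is `x · q f β / (β x + γ)`, so `g x = x F(x) - x` with
`F x = ∫ q f β / (β x + γ)`. Since `γ ≥ ε > 0` and `β` is bounded, dominated convergence makes `F`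
continuous on `[0, ∞)`, and a function of the form `x F(x)` has derivative `F 0 = R₀` at `0`.
-/

open MeasureTheory Filter Set Topology

theorem hasDerivWithinAt_id_mul_of_continuousWithinAt {𝕜 : Type*}
    [NontriviallyNormedField 𝕜] {F : 𝕜 → 𝕜} {s : Set 𝕜} (hF : ContinuousWithinAt F s 0) :
    HasDerivWithinAt (fun x => x * F x) (F 0) s 0 := by
  rw [hasDerivWithinAt_iff_tendsto_slope]
  refine (hF.mono_left (nhdsWithin_mono _ sdiff_subset)).congr' ?_
  filter_upwards [self_mem_nhdsWithin] with x hx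
  have hx0 : x ≠ 0 := hx.2
  rw [slope_def_field]
  field_simp
  ring

section

variable {Ω : Type*} [MeasurableSpace Ω] {μ : Measure Ω}

theorem integral_mul_add_div_add_of_mul_eq_zero (q β γ η f : Ω → ℝ)
    (hηf : ∀ᵐ ω ∂μ, η ω * f ω = 0) (x : ℝ) :
    ∫ ω, q ω * f ω * ((β ω * x + η ω) / (β ω * x + η ω + γ ω)) ∂μ
      = x * ∫ ω, q ω * f ω * (β ω / (β ω * x + γ ω)) ∂μ := by
  rw [← integral_const_mul]
  refine integral_congr_ae ?_
  filter_upwards [hηf] with ω hω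
  rcases mul_eq_zero.mp hω with hη | hf
  · rw [hη, add_zero, mul_comm (β ω) x, mul_div_assoc]
    ring
  · simp [hf]

theorem continuousOn_integral_mul_div_mul_add {w β γ : Ω → ℝ} (hw : Integrable w μ)
    (hβ : Measurable β) (hγ : Measurable γ) {M ε : ℝ} (h0β : ∀ ω, 0 ≤ β ω)
    (hβM : ∀ ω, β ω ≤ M) (hε : 0 < ε) (hγε : ∀ ω, ε ≤ γ ω) :
    ContinuousOn (fun x => ∫ ω, w ω * (β ω / (β ω * x + γ ω)) ∂μ) (Ici 0) := by
  have hden : ∀ ω, ∀ x ∈ Ici (0 : ℝ), ε ≤ β ω * x + γ ω := fun ω x hx => by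
    nlinarith [h0β ω, hγε ω, mem_Ici.mp hx]
  refine continuousOn_of_dominated (bound := fun ω => ‖w ω‖ * (M / ε)) ?_ ?_
    (hw.norm.mul_const _) ?_
  · intro x _
    exact hw.aestronglyMeasurable.mul
      (hβ.div ((hβ.mul_const x).add hγ)).aestronglyMeasurable
  · intro x hx
    refine ae_of_all _ fun ω => ?_
    have hM : 0 ≤ M := (h0β ω).trans (hβM ω)
    rw [norm_mul, Real.norm_of_nonneg (div_nonneg (h0β ω) (hε.le.trans (hden ω x hx)))]
    exact mul_le_mul_of_nonneg_left (div_le_div₀ hM (hβM ω) hε (hden ω x hx)) (norm_nonneg _)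
  · refine ae_of_all _ fun ω => ?_
    refine continuousOn_const.mul (continuousOn_const.div (by fun_prop) fun x hx => ?_)
    exact (hε.trans_le (hden ω x hx)).ne'

end

theorem stmt_4_general
    {Ω : Type*} [MeasurableSpace Ω] (μ : Measure Ω)
    (q β γ η f : Ω → ℝ)
    (hmβ : Measurable β) (hmγ : Measurable γ)
    (h0β : ∀ ω, 0 ≤ β ω)
    (M : ℝ) (hbβ : ∀ ω, β ω ≤ M)
    (hqfint : ∫ ω, q ω * f ω ∂μ = 1)
    (ε : ℝ) (hε : 0 < ε) (hγε : ∀ ω, ε ≤ γ ω)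
    (g : ℝ → ℝ)
    (hgdef : ∀ x, g x =
      (∫ ω, q ω * f ω * ((β ω * x + η ω) / (β ω * x + η ω + γ ω)) ∂μ) - x)
    (hηf : ∀ᵐ ω ∂μ, η ω * f ω = 0)
    (R₀ : ℝ) (hR₀ : R₀ = ∫ ω, q ω * f ω * (β ω / γ ω) ∂μ) :
    g 0 = 0 ∧ HasDerivWithinAt g (R₀ - 1) (Icc (0:ℝ) 1) 0 := by
  set F : ℝ → ℝ := fun x => ∫ ω, q ω * f ω * (β ω / (β ω * x + γ ω)) ∂μ
  have hg : g = fun x => x * F x - x := funext fun x => by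
    rw [hgdef, integral_mul_add_div_add_of_mul_eq_zero q β γ η f hηf]
  have hF0 : F 0 = R₀ := by simp [F, hR₀]
  have hqf : Integrable (fun ω => q ω * f ω) μ :=
    Integrable.of_integral_ne_zero (by rw [hqfint]; exact one_ne_zero)
  have hF : ContinuousWithinAt F (Icc 0 1) 0 :=
    ((continuousOn_integral_mul_div_mul_add hqf hmβ hmγ h0β hbβ hε hγε) 0
      self_mem_Ici).mono Icc_subset_Ici_self
  refine ⟨by simp [hg], ?_⟩
  rw [hg, ← hF0]
  exact (hasDerivWithinAt_id_mul_of_continuousWithinAt hF).sub (hasDerivWithinAt_id _ _)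

/-- If `η f = 0` a.e. then `g(0) = 0` and `g` is differentiable at `0` (within
`[0,1]`) with derivative `R₀ − 1`. -/
theorem stmt_4
    {Ω : Type*} [MeasurableSpace Ω] (μ : Measure Ω) [IsProbabilityMeasure μ]
    (q β γ η f : Ω → ℝ)
    (hmq : Measurable q) (hmβ : Measurable β) (hmγ : Measurable γ)
    (hmη : Measurable η) (hmf : Measurable f)
    (h0q : ∀ ω, 0 ≤ q ω) (h0β : ∀ ω, 0 ≤ β ω) (h0γ : ∀ ω, 0 ≤ γ ω)
    (h0η : ∀ ω, 0 ≤ η ω) (h0f : ∀ ω, 0 ≤ f ω)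
    (M : ℝ) (hbq : ∀ ω, q ω ≤ M) (hbβ : ∀ ω, β ω ≤ M) (hbγ : ∀ ω, γ ω ≤ M)
    (hbη : ∀ ω, η ω ≤ M) (hbf : ∀ ω, f ω ≤ M)
    (hfint : ∫ ω, f ω ∂μ = 1) (hqfint : ∫ ω, q ω * f ω ∂μ = 1)
    (hqpos : ∀ᵐ ω ∂μ, 0 < q ω)
    (ε : ℝ) (hε : 0 < ε) (hβε : ∀ ω, ε ≤ β ω) (hγε : ∀ ω, ε ≤ γ ω)
    (g : ℝ → ℝ)
    (hgdef : ∀ x, g x =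
      (∫ ω, q ω * f ω * ((β ω * x + η ω) / (β ω * x + η ω + γ ω)) ∂μ) - x)
    (hηf : ∀ᵐ ω ∂μ, η ω * f ω = 0)
    (R₀ : ℝ) (hR₀ : R₀ = ∫ ω, q ω * f ω * (β ω / γ ω) ∂μ) :
    g 0 = 0 ∧ HasDerivWithinAt g (R₀ - 1) (Icc (0:ℝ) 1) 0 :=
  stmt_4_general μ q β γ η f hmβ hmγ h0β M hbβ hqfint ε hε hγε g hgdef hηf R₀ hR₀
end

section
/- If η(ω)f(ω) = 0 for μ-a.e. ω and R₀ ≤ 1, where R₀ = ∫_Ω q(ω) f(ω) β(ω)/γ(ω) dμ(ω), then x = 0 is the unique root in [0,1] of the function g(x) = ∫_Ω q(ω) f(ω) (β(ω)x + η(ω))/(β(ω)x + η(ω) + γ(ω)) dμ(ω) − x. -/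
/-!
Where `η f = 0` the integrand of `g` loses its `η`, so `g x + x = ∫ q f · βx / (βx + γ)`, which
vanishes at `x = 0`. For `x > 0` the strict bound `βx / (βx + γ) < (β / γ) x`, weighted by `q f`
(which has integral `1`, hence is positive on a set of positive measure), gives
`g x + x < R₀ x ≤ x`.
-/

open MeasureTheory Set

theorem mul_div_add_eq_of_mul_eq_zero {w f a η c : ℝ} (h : η * f = 0) :
    w * f * ((a + η) / (a + η + c)) = w * f * (a / (a + c)) := by
  rcases mul_eq_zero.1 h with h | h <;> simp [h]

theorem div_add_lt_div_mul {b c x : ℝ} (hb : 0 < b) (hc : 0 < c) (hx : 0 < x) :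
    b * x / (b * x + c) < b / c * x := by
  rw [div_mul_eq_mul_div]
  exact div_lt_div_of_pos_left (by positivity) hc (lt_add_of_pos_left _ (by positivity))

section

variable {Ω : Type*} [MeasurableSpace Ω] {μ : Measure Ω}

theorem integral_mul_lt_integral_mul {w a b : Ω → ℝ} (hw₀ : 0 ≤ᵐ[μ] w)
    (hw : 0 < ∫ ω, w ω ∂μ) (hab : ∀ ω, a ω < b ω)
    (ha : Integrable (fun ω => w ω * a ω) μ) (hb : Integrable (fun ω => w ω * b ω) μ) :
    ∫ ω, w ω * a ω ∂μ < ∫ ω, w ω * b ω ∂μ := by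
  have hwi : Integrable w μ := Integrable.of_integral_ne_zero hw.ne'
  have hsupport : Function.support (fun ω => w ω * b ω - w ω * a ω) = Function.support w := by
    ext ω
    simp [← mul_sub, (sub_pos.2 (hab ω)).ne']
  have hnonneg : 0 ≤ᵐ[μ] fun ω => w ω * b ω - w ω * a ω := by
    filter_upwards [hw₀] with ω hω
    rw [← mul_sub]
    exact mul_nonneg hω (sub_pos.2 (hab ω)).le
  rw [← sub_pos, ← integral_sub hb ha,
    integral_pos_iff_support_of_nonneg_ae hnonneg (hb.sub ha), hsupport]
  exact (integral_pos_iff_support_of_nonneg_ae hw₀ hwi).1 hw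

theorem integral_mul_div_add_lt {w β γ : Ω → ℝ} {M ε x : ℝ} (hw₀ : 0 ≤ᵐ[μ] w)
    (hw : 0 < ∫ ω, w ω ∂μ) (hmβ : Measurable β) (hmγ : Measurable γ)
    (hβ : ∀ ω, 0 < β ω) (hbβ : ∀ ω, β ω ≤ M) (hε : 0 < ε) (hγε : ∀ ω, ε ≤ γ ω) (hx : 0 < x) :
    ∫ ω, w ω * (β ω * x / (β ω * x + γ ω)) ∂μ < (∫ ω, w ω * (β ω / γ ω) ∂μ) * x := by
  have hwi : Integrable w μ := Integrable.of_integral_ne_zero hw.ne'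
  have hγ : ∀ ω, 0 < γ ω := fun ω => hε.trans_le (hγε ω)
  have hint_ratio : Integrable (fun ω => w ω * (β ω * x / (β ω * x + γ ω))) μ := by
    refine hwi.mul_bdd (c := 1) (by fun_prop : Measurable _).aestronglyMeasurable
      (ae_of_all _ fun ω => ?_)
    have := hβ ω; have := hγ ω
    rw [Real.norm_of_nonneg (by positivity), div_le_one (by positivity)]
    linarith
  have hint_linear : Integrable (fun ω => w ω * (β ω / γ ω * x)) μ := by
    refine hwi.mul_bdd (c := M / ε * x) (by fun_prop : Measurable _).aestronglyMeasurable
      (ae_of_all _ fun ω => ?_)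
    have := hβ ω; have := hγ ω
    rw [Real.norm_of_nonneg (by positivity)]
    gcongr
    exacts [(hβ ω).le.trans (hbβ ω), hbβ ω, hγε ω]
  rw [← integral_mul_const]
  simp_rw [mul_assoc (w _)]
  exact integral_mul_lt_integral_mul hw₀ hw (fun ω => div_add_lt_div_mul (hβ ω) (hγ ω) hx)
    hint_ratio hint_linear

end

theorem stmt_5_general
    {Ω : Type*} [MeasurableSpace Ω] (μ : Measure Ω)
    (q β γ η f : Ω → ℝ)
    (hmβ : Measurable β) (hmγ : Measurable γ)
    (h0q : ∀ ω, 0 ≤ q ω)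
    (h0f : ∀ ω, 0 ≤ f ω)
    (M : ℝ) (hbβ : ∀ ω, β ω ≤ M)
    (hqfint : ∫ ω, q ω * f ω ∂μ = 1)
    (ε : ℝ) (hε : 0 < ε) (hβε : ∀ ω, ε ≤ β ω) (hγε : ∀ ω, ε ≤ γ ω)
    (g : ℝ → ℝ)
    (hgdef : ∀ x, g x =
      (∫ ω, q ω * f ω * ((β ω * x + η ω) / (β ω * x + η ω + γ ω)) ∂μ) - x)
    (hηf : ∀ᵐ ω ∂μ, η ω * f ω = 0)
    (R₀ : ℝ) (hR₀ : R₀ = ∫ ω, q ω * f ω * (β ω / γ ω) ∂μ) (hR₀le : R₀ ≤ 1) :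
    ∀ x ∈ Icc (0:ℝ) 1, (g x = 0 ↔ x = 0) := by
  rintro x ⟨hx₀, -⟩
  have hg : g x = ∫ ω, q ω * f ω * (β ω * x / (β ω * x + γ ω)) ∂μ - x := by
    rw [hgdef, integral_congr_ae (hηf.mono fun ω h => mul_div_add_eq_of_mul_eq_zero h)]
  rcases hx₀.eq_or_lt with rfl | hx
  · simp [hg]
  have hlt : ∫ ω, q ω * f ω * (β ω * x / (β ω * x + γ ω)) ∂μ < R₀ * x := by
    rw [hR₀]
    exact integral_mul_div_add_lt (ae_of_all _ fun ω => mul_nonneg (h0q ω) (h0f ω))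
      (by rw [hqfint]; exact one_pos) hmβ hmγ (fun ω => hε.trans_le (hβε ω)) hbβ hε hγε hx
  have hgx : g x < 0 := by
    rw [hg]
    linarith [mul_le_mul_of_nonneg_right hR₀le hx.le]
  exact ⟨fun h => absurd h hgx.ne, fun h => absurd h hx.ne'⟩

/-- If `η f = 0` a.e. and `R₀ ≤ 1` then `x = 0` is the unique root of `g` in `[0,1]`. -/
theorem stmt_5
    {Ω : Type*} [MeasurableSpace Ω] (μ : Measure Ω) [IsProbabilityMeasure μ]
    (q β γ η f : Ω → ℝ)
    (hmq : Measurable q) (hmβ : Measurable β) (hmγ : Measurable γ)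
    (hmη : Measurable η) (hmf : Measurable f)
    (h0q : ∀ ω, 0 ≤ q ω) (h0β : ∀ ω, 0 ≤ β ω) (h0γ : ∀ ω, 0 ≤ γ ω)
    (h0η : ∀ ω, 0 ≤ η ω) (h0f : ∀ ω, 0 ≤ f ω)
    (M : ℝ) (hbq : ∀ ω, q ω ≤ M) (hbβ : ∀ ω, β ω ≤ M) (hbγ : ∀ ω, γ ω ≤ M)
    (hbη : ∀ ω, η ω ≤ M) (hbf : ∀ ω, f ω ≤ M)
    (hfint : ∫ ω, f ω ∂μ = 1) (hqfint : ∫ ω, q ω * f ω ∂μ = 1)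
    (hqpos : ∀ᵐ ω ∂μ, 0 < q ω)
    (ε : ℝ) (hε : 0 < ε) (hβε : ∀ ω, ε ≤ β ω) (hγε : ∀ ω, ε ≤ γ ω)
    (g : ℝ → ℝ)
    (hgdef : ∀ x, g x =
      (∫ ω, q ω * f ω * ((β ω * x + η ω) / (β ω * x + η ω + γ ω)) ∂μ) - x)
    (hηf : ∀ᵐ ω ∂μ, η ω * f ω = 0)
    (R₀ : ℝ) (hR₀ : R₀ = ∫ ω, q ω * f ω * (β ω / γ ω) ∂μ) (hR₀le : R₀ ≤ 1) :
    ∀ x ∈ Icc (0:ℝ) 1, (g x = 0 ↔ x = 0) :=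
  stmt_5_general μ q β γ η f hmβ hmγ h0q h0f M hbβ hqfint ε hε hβε hγε g hgdef hηf R₀ hR₀ hR₀le
end

section
/- If η(ω)f(ω) = 0 for μ-a.e. ω and R₀ > 1, where R₀ = ∫_Ω q(ω) f(ω) β(ω)/γ(ω) dμ(ω), then the function g(x) = ∫_Ω q(ω) f(ω) (β(ω)x + η(ω))/(β(ω)x + η(ω) + γ(ω)) dμ(ω) − x has exactly two roots in [0,1]: the root x = 0 and exactly one root in the open interval (0,1). -/
open MeasureTheory Filter Set Topology

/-!
Since `η f = 0` a.e., the integrand of `g` is `x · q f β/(βx + γ)`, so `g x = x (R x - 1)` with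
`R x = ∫ q f β/(βx + γ)`. `R` is continuous (dominated by its value at `0`) and strictly
decreasing on `[0, ∞)`, `R 0 = R₀ > 1` and `R 1 < ∫ q f = 1` because `β/(β + γ) < 1`; the
intermediate value theorem gives the unique root of `R x = 1` in `(0, 1)`. Integrability of
`q f` and `q f β/γ` comes for free: their integrals `1` and `R₀` are nonzero.
-/

noncomputable def reproductionNumber {Ω : Type*} [MeasurableSpace Ω] (μ : Measure Ω)
    (w β γ : Ω → ℝ) (x : ℝ) : ℝ :=
  ∫ ω, w ω * (β ω / (β ω * x + γ ω)) ∂μ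

theorem exists_mem_Ioo_eq_of_strictAntiOn {H : ℝ → ℝ} {a b c : ℝ} (hab : a ≤ b)
    (hcont : ContinuousOn H (Icc a b)) (hanti : StrictAntiOn H (Icc a b))
    (hb : H b < c) (ha : c < H a) :
    ∃ x ∈ Ioo a b, H x = c ∧ ∀ y ∈ Icc a b, H y = c → y = x := by
  obtain ⟨x, hx, hHx⟩ := intermediate_value_Ioo' hab hcont ⟨hb, ha⟩
  exact ⟨x, hx, hHx, fun y hy hHy => hanti.injOn hy (Ioo_subset_Icc_self hx) (hHy.trans hHx.symm)⟩

theorem norm_mul_div_mul_add_le {w β γ x : ℝ} (hw : 0 ≤ w) (hβ : 0 ≤ β) (hγ : 0 < γ)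
    (hx : 0 ≤ x) : ‖w * (β / (β * x + γ))‖ ≤ w * (β / γ) := by
  rw [Real.norm_of_nonneg (by positivity)]
  gcongr
  nlinarith

section

variable {Ω : Type*} [MeasurableSpace Ω] {μ : Measure Ω}

theorem integral_mul_lt_integral_mul_of_lt {w φ ψ : Ω → ℝ} (hw : 0 ≤ w)
    (hw_pos : 0 < ∫ ω, w ω ∂μ) (hφ : Integrable (fun ω => w ω * φ ω) μ)
    (hψ : Integrable (fun ω => w ω * ψ ω) μ) (hlt : ∀ ω, φ ω < ψ ω) :
    ∫ ω, w ω * φ ω ∂μ < ∫ ω, w ω * ψ ω ∂μ := by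
  have hsupp : Function.support (fun ω => w ω * ψ ω - w ω * φ ω) = Function.support w := by
    ext ω
    simp [← mul_sub, sub_ne_zero.2 (hlt ω).ne']
  have hdiff_nonneg : 0 ≤ fun ω => w ω * ψ ω - w ω * φ ω := fun ω => by
    simpa [← mul_sub] using mul_nonneg (hw ω) (sub_nonneg.2 (hlt ω).le)
  have hdiff_pos : 0 < ∫ ω, (w ω * ψ ω - w ω * φ ω) ∂μ := by
    rw [integral_pos_iff_support_of_nonneg hdiff_nonneg (hψ.sub hφ), hsupp]
    exact (integral_pos_iff_support_of_nonneg hw (Integrable.of_integral_ne_zero hw_pos.ne')).1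
      hw_pos
  rwa [integral_sub hψ hφ, sub_pos] at hdiff_pos

variable {w β γ : Ω → ℝ}

theorem reproductionNumber_zero : reproductionNumber μ w β γ 0 = ∫ ω, w ω * (β ω / γ ω) ∂μ := by
  simp [reproductionNumber]

theorem integral_eq_mul_reproductionNumber {η : Ω → ℝ} (hη : ∀ᵐ ω ∂μ, η ω * w ω = 0) (x : ℝ) :
    ∫ ω, w ω * ((β ω * x + η ω) / (β ω * x + η ω + γ ω)) ∂μ =
      x * reproductionNumber μ w β γ x := by
  rw [reproductionNumber, ← integral_const_mul]
  refine integral_congr_ae ?_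
  filter_upwards [hη] with ω hω
  rcases mul_eq_zero.1 hω with hη0 | hw0
  · rw [hη0]
    ring
  · simp [hw0]

section

variable (hw : AEStronglyMeasurable w μ) (hw0 : 0 ≤ w) (hβm : Measurable β) (hγm : Measurable γ)
  (hγ : ∀ ω, 0 < γ ω) (hR : Integrable (fun ω => w ω * (β ω / γ ω)) μ)
include hw hw0 hβm hγm hγ hR

theorem integrable_mul_div_mul_add (hβ : ∀ ω, 0 ≤ β ω) {x : ℝ} (hx : 0 ≤ x) :
    Integrable (fun ω => w ω * (β ω / (β ω * x + γ ω))) μ :=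
  hR.mono' (hw.mul (hβm.div ((hβm.mul_const x).add hγm)).aestronglyMeasurable)
    (Eventually.of_forall fun ω => norm_mul_div_mul_add_le (hw0 ω) (hβ ω) (hγ ω) hx)

theorem continuousOn_reproductionNumber (hβ : ∀ ω, 0 ≤ β ω) :
    ContinuousOn (reproductionNumber μ w β γ) (Ici 0) := by
  refine continuousOn_of_dominated
    (fun x hx => (integrable_mul_div_mul_add hw hw0 hβm hγm hγ hR hβ hx).aestronglyMeasurable)
    (fun x hx => Eventually.of_forall fun ω => norm_mul_div_mul_add_le (hw0 ω) (hβ ω) (hγ ω) hx)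
    hR (Eventually.of_forall fun ω => ?_)
  refine continuousOn_const.mul (continuousOn_const.div (by fun_prop) fun x hx => ?_)
  exact (add_pos_of_nonneg_of_pos (mul_nonneg (hβ ω) hx) (hγ ω)).ne'

theorem strictAntiOn_reproductionNumber (hβ : ∀ ω, 0 < β ω) (hw_pos : 0 < ∫ ω, w ω ∂μ) :
    StrictAntiOn (reproductionNumber μ w β γ) (Ici 0) := by
  intro a (ha : 0 ≤ a) b (hb : 0 ≤ b) hab
  refine integral_mul_lt_integral_mul_of_lt hw0 hw_pos
    (integrable_mul_div_mul_add hw hw0 hβm hγm hγ hR (fun ω => (hβ ω).le) hb)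
    (integrable_mul_div_mul_add hw hw0 hβm hγm hγ hR (fun ω => (hβ ω).le) ha) fun ω => ?_
  have := hβ ω
  have := hγ ω
  gcongr

theorem reproductionNumber_one_lt (hβ : ∀ ω, 0 ≤ β ω) (hw_pos : 0 < ∫ ω, w ω ∂μ) :
    reproductionNumber μ w β γ 1 < ∫ ω, w ω ∂μ := by
  simpa [reproductionNumber] using integral_mul_lt_integral_mul_of_lt (ψ := 1) hw0 hw_pos
    (integrable_mul_div_mul_add hw hw0 hβm hγm hγ hR hβ zero_le_one)
    (by simpa using Integrable.of_integral_ne_zero hw_pos.ne')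
    fun ω => (div_lt_one (by linarith [hβ ω, hγ ω])).2 (by linarith [hγ ω])

end

end

theorem stmt_6_general
    {Ω : Type*} [MeasurableSpace Ω] (μ : Measure Ω)
    (q β γ η f : Ω → ℝ)
    (hmβ : Measurable β) (hmγ : Measurable γ)
    (h0q : ∀ ω, 0 ≤ q ω) (h0f : ∀ ω, 0 ≤ f ω)
    (hqfint : ∫ ω, q ω * f ω ∂μ = 1)
    (ε : ℝ) (hε : 0 < ε) (hβε : ∀ ω, ε ≤ β ω) (hγε : ∀ ω, ε ≤ γ ω)
    (g : ℝ → ℝ)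
    (hgdef : ∀ x, g x =
      (∫ ω, q ω * f ω * ((β ω * x + η ω) / (β ω * x + η ω + γ ω)) ∂μ) - x)
    (hηf : ∀ᵐ ω ∂μ, η ω * f ω = 0)
    (R₀ : ℝ) (hR₀ : R₀ = ∫ ω, q ω * f ω * (β ω / γ ω) ∂μ) (hR₀gt : 1 < R₀) :
    g 0 = 0 ∧
    ∃ x ∈ Ioo (0:ℝ) 1, g x = 0 ∧
      ∀ y ∈ Icc (0:ℝ) 1, g y = 0 → y = 0 ∨ y = x := by
  have hβ : ∀ ω, 0 < β ω := fun ω => hε.trans_le (hβε ω)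
  have hγ : ∀ ω, 0 < γ ω := fun ω => hε.trans_le (hγε ω)
  have hw0 : 0 ≤ fun ω => q ω * f ω := fun ω => mul_nonneg (h0q ω) (h0f ω)
  have hw_pos : 0 < ∫ ω, q ω * f ω ∂μ := hqfint ▸ one_pos
  have hw : AEStronglyMeasurable (fun ω => q ω * f ω) μ :=
    (Integrable.of_integral_ne_zero hw_pos.ne').aestronglyMeasurable
  have hR : Integrable (fun ω => q ω * f ω * (β ω / γ ω)) μ :=
    .of_integral_ne_zero (by rw [← hR₀]; linarith)
  let R := reproductionNumber μ (fun ω => q ω * f ω) β γ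
  have hg : ∀ x, g x = x * (R x - 1) := fun x => by
    rw [hgdef, integral_eq_mul_reproductionNumber (hηf.mono fun ω h => by
      rw [mul_left_comm, h, mul_zero])]
    ring
  have hR0 : 1 < R 0 := hR₀gt.trans_eq (hR₀.trans reproductionNumber_zero.symm)
  have hR1 : R 1 < 1 :=
    hqfint ▸ reproductionNumber_one_lt hw hw0 hmβ hmγ hγ hR (fun ω => (hβ ω).le) hw_pos
  obtain ⟨x, hx, hRx, huniq⟩ : ∃ x ∈ Ioo (0:ℝ) 1, R x = 1 ∧ ∀ y ∈ Icc (0:ℝ) 1, R y = 1 → y = x :=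
    exists_mem_Ioo_eq_of_strictAntiOn zero_le_one
      ((continuousOn_reproductionNumber hw hw0 hmβ hmγ hγ hR fun ω => (hβ ω).le).mono
        Icc_subset_Ici_self)
      ((strictAntiOn_reproductionNumber hw hw0 hmβ hmγ hγ hR hβ hw_pos).mono Icc_subset_Ici_self)
      hR1 hR0
  refine ⟨by simp [hg], x, hx, by rw [hg, hRx, sub_self, mul_zero], fun y hy hgy => ?_⟩
  rw [hg, mul_eq_zero, sub_eq_zero] at hgy
  exact hgy.imp_right (huniq y hy)

/-- If `η f = 0` a.e. and `R₀ > 1` then `g` has exactly two roots in `[0,1]`: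
the root `0` and exactly one root in `(0,1)`. -/
theorem stmt_6
    {Ω : Type*} [MeasurableSpace Ω] (μ : Measure Ω) [IsProbabilityMeasure μ]
    (q β γ η f : Ω → ℝ)
    (hmq : Measurable q) (hmβ : Measurable β) (hmγ : Measurable γ)
    (hmη : Measurable η) (hmf : Measurable f)
    (h0q : ∀ ω, 0 ≤ q ω) (h0β : ∀ ω, 0 ≤ β ω) (h0γ : ∀ ω, 0 ≤ γ ω)
    (h0η : ∀ ω, 0 ≤ η ω) (h0f : ∀ ω, 0 ≤ f ω)
    (M : ℝ) (hbq : ∀ ω, q ω ≤ M) (hbβ : ∀ ω, β ω ≤ M) (hbγ : ∀ ω, γ ω ≤ M)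
    (hbη : ∀ ω, η ω ≤ M) (hbf : ∀ ω, f ω ≤ M)
    (hfint : ∫ ω, f ω ∂μ = 1) (hqfint : ∫ ω, q ω * f ω ∂μ = 1)
    (hqpos : ∀ᵐ ω ∂μ, 0 < q ω)
    (ε : ℝ) (hε : 0 < ε) (hβε : ∀ ω, ε ≤ β ω) (hγε : ∀ ω, ε ≤ γ ω)
    (g : ℝ → ℝ)
    (hgdef : ∀ x, g x =
      (∫ ω, q ω * f ω * ((β ω * x + η ω) / (β ω * x + η ω + γ ω)) ∂μ) - x)
    (hηf : ∀ᵐ ω ∂μ, η ω * f ω = 0)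
    (R₀ : ℝ) (hR₀ : R₀ = ∫ ω, q ω * f ω * (β ω / γ ω) ∂μ) (hR₀gt : 1 < R₀) :
    g 0 = 0 ∧
    ∃ x ∈ Ioo (0:ℝ) 1, g x = 0 ∧
      ∀ y ∈ Icc (0:ℝ) 1, g y = 0 → y = 0 ∨ y = x :=
  stmt_6_general μ q β γ η f hmβ hmγ h0q h0f hqfint ε hε hβε hγε g hgdef hηf R₀ hR₀ hR₀gt
end

section
/- (i) If Î is a steady state of the heterogeneous SIS model and Ĵ = ∫_Ω q Î dμ, then Ĵ ∈ [0,1], g(Ĵ) = 0, and Î(ω) = h(Ĵ, ω) for every ω ∈ Ω. (ii) Conversely, if x ∈ [0,1] satisfies g(x) = 0, then the function Î(ω) := h(x, ω) is a steady state with ∫_Ω q Î dμ = x. -/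
/-!
Since `γ > 0`, the steady-state equation can be solved pointwise for `Î(ω)`: it says exactly
`Î = h(Ĵ, ·)`. Integrating `q Î` then turns the self-consistency `Ĵ = ∫ q Î` into `g(Ĵ) = 0`, and
conversely. The bound `Ĵ ≤ 1` is `∫ q Î ≤ ∫ q f = 1`; no integrability of `q Î` is needed
because `q f` is integrable (its integral is nonzero) and dominates `q Î ≥ 0`.
-/

open MeasureTheory Set

lemma eq_mul_div_add_iff {K : Type*} [Field K] {a c u v : K} (hac : a + c ≠ 0) :
    v = u * (a / (a + c)) ↔ a * u = (a + c) * v := by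
  rw [mul_div_assoc', eq_div_iff hac]
  constructor <;> intro h <;> linear_combination -h

lemma integral_mul_le_integral_mul_of_le {Ω : Type*} [MeasurableSpace Ω] {μ : Measure Ω}
    {q u v : Ω → ℝ} (hq : ∀ ω, 0 ≤ q ω) (hu : ∀ ω, 0 ≤ u ω) (huv : ∀ ω, u ω ≤ v ω)
    (hqv : Integrable (fun ω => q ω * v ω) μ) :
    ∫ ω, q ω * u ω ∂μ ≤ ∫ ω, q ω * v ω ∂μ :=
  integral_mono_of_nonneg (ae_of_all _ fun ω => mul_nonneg (hq ω) (hu ω)) hqv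
    (ae_of_all _ fun ω => mul_le_mul_of_nonneg_left (huv ω) (hq ω))

namespace SIS

variable {Ω : Type*} {β γ η : Ω → ℝ} {x : ℝ}

/-- The fraction `(β x + η) / (β x + η + γ)` of the population `f` that is infected at
force of infection `x`, so that `h(x, ω) = f(ω) * infectedFraction β γ η x ω`. -/
noncomputable def infectedFraction (β γ η : Ω → ℝ) (x : ℝ) (ω : Ω) : ℝ :=
  (β ω * x + η ω) / (β ω * x + η ω + γ ω)

lemma denominator_pos (hβ : ∀ ω, 0 ≤ β ω) (hη : ∀ ω, 0 ≤ η ω) (hγ : ∀ ω, 0 < γ ω)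
    (hx : 0 ≤ x) (ω : Ω) :
    0 < β ω * x + η ω + γ ω :=
  add_pos_of_nonneg_of_pos (add_nonneg (mul_nonneg (hβ ω) hx) (hη ω)) (hγ ω)

lemma infectedFraction_nonneg (hβ : ∀ ω, 0 ≤ β ω) (hη : ∀ ω, 0 ≤ η ω) (hγ : ∀ ω, 0 < γ ω)
    (hx : 0 ≤ x) (ω : Ω) :
    0 ≤ infectedFraction β γ η x ω :=
  div_nonneg (add_nonneg (mul_nonneg (hβ ω) hx) (hη ω)) (denominator_pos hβ hη hγ hx ω).le

lemma infectedFraction_le_one (hβ : ∀ ω, 0 ≤ β ω) (hη : ∀ ω, 0 ≤ η ω) (hγ : ∀ ω, 0 < γ ω)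
    (hx : 0 ≤ x) (ω : Ω) :
    infectedFraction β γ η x ω ≤ 1 :=
  div_le_one_of_le₀ (le_add_of_nonneg_right (hγ ω).le) (denominator_pos hβ hη hγ hx ω).le

lemma steadyState_iff (hβ : ∀ ω, 0 ≤ β ω) (hη : ∀ ω, 0 ≤ η ω) (hγ : ∀ ω, 0 < γ ω)
    (hx : 0 ≤ x) {f : Ω → ℝ} {I : ℝ} (ω : Ω) :
    (β ω * x + η ω) * f ω = (β ω * x + η ω + γ ω) * I ↔
      I = f ω * infectedFraction β γ η x ω :=
  (eq_mul_div_add_iff (denominator_pos hβ hη hγ hx ω).ne').symm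

lemma measurable_infectedFraction [MeasurableSpace Ω] (hβ : Measurable β) (hγ : Measurable γ)
    (hη : Measurable η) (x : ℝ) : Measurable (infectedFraction β γ η x) :=
  ((hβ.mul_const x).add hη).div (((hβ.mul_const x).add hη).add hγ)

end SIS

open SIS

theorem stmt_7_general
    {Ω : Type*} [MeasurableSpace Ω] (μ : Measure Ω)
    (q β γ η f : Ω → ℝ)
    (hmβ : Measurable β) (hmγ : Measurable γ)
    (hmη : Measurable η) (hmf : Measurable f)
    (h0q : ∀ ω, 0 ≤ q ω) (h0β : ∀ ω, 0 ≤ β ω)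
    (h0η : ∀ ω, 0 ≤ η ω) (h0f : ∀ ω, 0 ≤ f ω)
    (hqfint : ∫ ω, q ω * f ω ∂μ = 1)
    (ε : ℝ) (hε : 0 < ε) (hγε : ∀ ω, ε ≤ γ ω)
    (g : ℝ → ℝ)
    (hgdef : ∀ x, g x =
      (∫ ω, q ω * f ω * ((β ω * x + η ω) / (β ω * x + η ω + γ ω)) ∂μ) - x)
    (h : ℝ → Ω → ℝ)
    (hhdef : ∀ x ω, h x ω = f ω * ((β ω * x + η ω) / (β ω * x + η ω + γ ω))) :
    (∀ Ihat : Ω → ℝ, Measurable Ihat →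
      (∀ ω, 0 ≤ Ihat ω) → (∀ ω, Ihat ω ≤ f ω) →
      (∀ ω, (β ω * (∫ ω', q ω' * Ihat ω' ∂μ) + η ω) * f ω =
            (β ω * (∫ ω', q ω' * Ihat ω' ∂μ) + η ω + γ ω) * Ihat ω) →
      ((∫ ω', q ω' * Ihat ω' ∂μ) ∈ Icc (0:ℝ) 1 ∧
       g (∫ ω', q ω' * Ihat ω' ∂μ) = 0 ∧
       ∀ ω, Ihat ω = h (∫ ω', q ω' * Ihat ω' ∂μ) ω)) ∧
    (∀ x ∈ Icc (0:ℝ) 1, g x = 0 →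
      (Measurable (fun ω => h x ω) ∧
       (∀ ω, 0 ≤ h x ω) ∧ (∀ ω, h x ω ≤ f ω) ∧
       (∫ ω, q ω * h x ω ∂μ) = x ∧
       (∀ ω, (β ω * (∫ ω', q ω' * h x ω' ∂μ) + η ω) * f ω =
             (β ω * (∫ ω', q ω' * h x ω' ∂μ) + η ω + γ ω) * h x ω))) := by
  have hγ : ∀ ω, 0 < γ ω := fun ω => hε.trans_le (hγε ω)
  have hh : ∀ x ω, h x ω = f ω * infectedFraction β γ η x ω := hhdef
  have hg : ∀ x, g x = (∫ ω, q ω * h x ω ∂μ) - x := fun x => by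
    simp only [hgdef, hhdef, mul_assoc]
  constructor
  · intro I _ h0I hIf hI
    set J := ∫ ω, q ω * I ω ∂μ
    have hJ0 : 0 ≤ J := integral_nonneg fun ω => mul_nonneg (h0q ω) (h0I ω)
    have hIh : ∀ ω, I ω = h J ω := fun ω => by
      rw [hh, ← steadyState_iff h0β h0η hγ hJ0, hI]
    have hJ1 : J ≤ 1 := hqfint ▸ integral_mul_le_integral_mul_of_le h0q h0I hIf
      (.of_integral_ne_zero (hqfint ▸ one_ne_zero))
    refine ⟨⟨hJ0, hJ1⟩, ?_, hIh⟩
    simp only [hg, ← hIh]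
    exact sub_self J
  · intro x hx hgx
    have hJ : ∫ ω, q ω * h x ω ∂μ = x := by linarith [hg x]
    simp only [hh] at hJ ⊢
    refine ⟨hmf.mul (measurable_infectedFraction hmβ hmγ hmη x),
      fun ω => mul_nonneg (h0f ω) (infectedFraction_nonneg h0β h0η hγ hx.1 ω),
      fun ω => mul_le_of_le_one_right (h0f ω) (infectedFraction_le_one h0β h0η hγ hx.1 ω),
      hJ, fun ω => ?_⟩
    rw [hJ]
    exact (steadyState_iff h0β h0η hγ hx.1 ω).mpr rfl

/-- Characterization of steady states: (i) every steady state `Î` has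
`Ĵ = ∫ q Î ∈ [0,1]`, `g(Ĵ) = 0` and `Î(ω) = h(Ĵ,ω)`; (ii) conversely every root
`x ∈ [0,1]` of `g` gives the steady state `Î = h(x,·)` with `∫ q Î = x`. -/
theorem stmt_7
    {Ω : Type*} [MeasurableSpace Ω] (μ : Measure Ω) [IsProbabilityMeasure μ]
    (q β γ η f : Ω → ℝ)
    (hmq : Measurable q) (hmβ : Measurable β) (hmγ : Measurable γ)
    (hmη : Measurable η) (hmf : Measurable f)
    (h0q : ∀ ω, 0 ≤ q ω) (h0β : ∀ ω, 0 ≤ β ω) (h0γ : ∀ ω, 0 ≤ γ ω)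
    (h0η : ∀ ω, 0 ≤ η ω) (h0f : ∀ ω, 0 ≤ f ω)
    (M : ℝ) (hbq : ∀ ω, q ω ≤ M) (hbβ : ∀ ω, β ω ≤ M) (hbγ : ∀ ω, γ ω ≤ M)
    (hbη : ∀ ω, η ω ≤ M) (hbf : ∀ ω, f ω ≤ M)
    (hfint : ∫ ω, f ω ∂μ = 1) (hqfint : ∫ ω, q ω * f ω ∂μ = 1)
    (hqpos : ∀ᵐ ω ∂μ, 0 < q ω)
    (ε : ℝ) (hε : 0 < ε) (hβε : ∀ ω, ε ≤ β ω) (hγε : ∀ ω, ε ≤ γ ω)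
    (g : ℝ → ℝ)
    (hgdef : ∀ x, g x =
      (∫ ω, q ω * f ω * ((β ω * x + η ω) / (β ω * x + η ω + γ ω)) ∂μ) - x)
    (h : ℝ → Ω → ℝ)
    (hhdef : ∀ x ω, h x ω = f ω * ((β ω * x + η ω) / (β ω * x + η ω + γ ω))) :
    (∀ Ihat : Ω → ℝ, Measurable Ihat →
      (∀ ω, 0 ≤ Ihat ω) → (∀ ω, Ihat ω ≤ f ω) →
      (∀ ω, (β ω * (∫ ω', q ω' * Ihat ω' ∂μ) + η ω) * f ω =
            (β ω * (∫ ω', q ω' * Ihat ω' ∂μ) + η ω + γ ω) * Ihat ω) →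
      ((∫ ω', q ω' * Ihat ω' ∂μ) ∈ Icc (0:ℝ) 1 ∧
       g (∫ ω', q ω' * Ihat ω' ∂μ) = 0 ∧
       ∀ ω, Ihat ω = h (∫ ω', q ω' * Ihat ω' ∂μ) ω)) ∧
    (∀ x ∈ Icc (0:ℝ) 1, g x = 0 →
      (Measurable (fun ω => h x ω) ∧
       (∀ ω, 0 ≤ h x ω) ∧ (∀ ω, h x ω ≤ f ω) ∧
       (∫ ω, q ω * h x ω ∂μ) = x ∧
       (∀ ω, (β ω * (∫ ω', q ω' * h x ω' ∂μ) + η ω) * f ω =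
             (β ω * (∫ ω', q ω' * h x ω' ∂μ) + η ω + γ ω) * h x ω))) :=
  stmt_7_general μ q β γ η f hmβ hmγ hmη hmf h0q h0β h0η h0f hqfint ε hε hγε g hgdef h hhdef
end

section
/- Suppose η(ω)f(ω) = 0 for μ-a.e. ω. If I is a solution of the heterogeneous SIS model with I(0,ω) = 0 for μ-a.e. ω, then J(t) = ∫_Ω q(ω) I(t,ω) dμ(ω) = 0 for all t ≥ 0, and for each t ≥ 0 one has I(t,ω) = 0 for μ-a.e. ω. -/
/-!
Once `η f = 0` a.e. the external infection term disappears, and since the loss term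
`(βJ + η + γ) I` is nonnegative, `J' = ∫ q ∂I/∂t ≤ J ∫ q β f ≤ C J`. Grönwall's inequality with
`J(0) = 0` then gives `J ≤ 0`, hence `J ≡ 0` as `J ≥ 0`. Finally `∫ q I(t,·) = 0` with a
nonnegative integrand forces `q I(t,·) = 0` a.e., and `q > 0` a.e. gives `I(t,·) = 0` a.e.
-/

open MeasureTheory Filter Set Topology

variable {Ω : Type*} [MeasurableSpace Ω]

/-- The aggregated weighted infected population `J(t) = ∫ q(ω) I(t,ω) dμ(ω)`. -/
noncomputable def Jfun (μ : Measure Ω) (q : Ω → ℝ) (I : ℝ → Ω → ℝ) (t : ℝ) : ℝ :=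
  ∫ ω, q ω * I t ω ∂μ

/-- The right-hand side of the heterogeneous SIS equation, i.e. `∂I/∂t(t,ω)`. -/
noncomputable def Dfun (μ : Measure Ω) (q β γ η f : Ω → ℝ) (I : ℝ → Ω → ℝ)
    (t : ℝ) (ω : Ω) : ℝ :=
  (β ω * Jfun μ q I t + η ω) * f ω - (β ω * Jfun μ q I t + η ω + γ ω) * I t ω

/-- A solution of the heterogeneous SIS model: for each `t ≥ 0`, `I(t,·)` is
measurable with `0 ≤ I(t,ω) ≤ f(ω)`; for each `ω`, `t ↦ I(t,ω)` is differentiable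
on `[0,∞)` with derivative `(β(ω)J(t)+η(ω))f(ω) − (β(ω)J(t)+η(ω)+γ(ω))I(t,ω)`;
and `J` is differentiable on `[0,∞)` with `J'(t) = ∫ q(ω) ∂I/∂t(t,ω) dμ(ω)`. -/
def IsSolution (μ : Measure Ω) (q β γ η f : Ω → ℝ) (I : ℝ → Ω → ℝ) : Prop :=
  (∀ t, 0 ≤ t → Measurable (fun ω => I t ω)) ∧
  (∀ t, 0 ≤ t → ∀ ω, 0 ≤ I t ω ∧ I t ω ≤ f ω) ∧
  (∀ ω, ∀ t, 0 ≤ t →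
    HasDerivWithinAt (fun s => I s ω) (Dfun μ q β γ η f I t ω) (Ici 0) t) ∧
  (∀ t, 0 ≤ t →
    HasDerivWithinAt (Jfun μ q I) (∫ ω, q ω * Dfun μ q β γ η f I t ω ∂μ) (Ici 0) t)

/-- `h(x,ω) = f(ω)(β(ω)x + η(ω))/(β(ω)x + η(ω) + γ(ω))`. -/
noncomputable def hfun (β γ η f : Ω → ℝ) (x : ℝ) (ω : Ω) : ℝ :=
  f ω * ((β ω * x + η ω) / (β ω * x + η ω + γ ω))

theorem nonpos_of_hasDerivWithinAt_le_mul_self {f f' : ℝ → ℝ} {K a t : ℝ}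
    (hf : ∀ s, a ≤ s → HasDerivWithinAt f (f' s) (Ici a) s) (ha : f a ≤ 0)
    (bound : ∀ s, a ≤ s → f' s ≤ K * f s) (ht : a ≤ t) : f t ≤ 0 := by
  have := le_gronwallBound_of_liminf_deriv_right_le (ε := 0)
    (fun s hs => (hf s hs.1).continuousWithinAt.mono Icc_subset_Ici_self)
    (fun s hs r hr => ((hf s hs.1).mono (Ici_subset_Ici.2 hs.1)).liminf_right_slope_le hr)
    ha (fun s hs => by simpa using bound s hs.1) t ⟨ht, le_rfl⟩
  rwa [gronwallBound_ε0_δ0] at this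

theorem integral_le_of_le_const {μ : Measure Ω} [IsFiniteMeasure μ] {g : Ω → ℝ} {C : ℝ}
    (hC : 0 ≤ C) (h : ∀ᵐ ω ∂μ, g ω ≤ C) : ∫ ω, g ω ∂μ ≤ C * μ.real univ := by
  by_cases hg : Integrable g μ
  · calc ∫ ω, g ω ∂μ ≤ ∫ _, C ∂μ := integral_mono_ae hg (integrable_const C) h
      _ = C * μ.real univ := by rw [integral_const, smul_eq_mul, mul_comm]
  · rw [integral_undef hg]
    positivity

section SIS

variable {μ : Measure Ω} {q β γ η f : Ω → ℝ} {I : ℝ → Ω → ℝ} {t : ℝ}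

theorem Jfun_eq_zero_of_ae_eq_zero (h : ∀ᵐ ω ∂μ, I t ω = 0) : Jfun μ q I t = 0 :=
  integral_eq_zero_of_ae (h.mono fun ω hω => by simp [hω])

theorem ae_eq_zero_of_Jfun_eq_zero (hint : Integrable (fun ω => q ω * I t ω) μ)
    (h0q : ∀ ω, 0 ≤ q ω) (hI : ∀ ω, 0 ≤ I t ω) (hqpos : ∀ᵐ ω ∂μ, 0 < q ω)
    (hJ : Jfun μ q I t = 0) : ∀ᵐ ω ∂μ, I t ω = 0 := by
  have hqI := (integral_eq_zero_iff_of_nonneg (fun ω => mul_nonneg (h0q ω) (hI ω)) hint).1 hJ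
  filter_upwards [hqI, hqpos] with ω hω hqω
  exact (mul_eq_zero.1 hω).resolve_left hqω.ne'

theorem Dfun_le_mul_Jfun {ω : Ω} (hηf : η ω * f ω = 0) (h0β : 0 ≤ β ω) (h0γ : 0 ≤ γ ω)
    (h0η : 0 ≤ η ω) (hI : 0 ≤ I t ω) (hJ : 0 ≤ Jfun μ q I t) :
    Dfun μ q β γ η f I t ω ≤ β ω * f ω * Jfun μ q I t := by
  have hloss : 0 ≤ (β ω * Jfun μ q I t + η ω + γ ω) * I t ω := by positivity
  rw [Dfun]
  linarith

theorem integral_mul_Dfun_le_mul_Jfun [IsFiniteMeasure μ] {C : ℝ} (hC0 : 0 ≤ C)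
    (hC : ∀ ω, q ω * β ω * f ω ≤ C) (hηf : ∀ᵐ ω ∂μ, η ω * f ω = 0) (h0q : ∀ ω, 0 ≤ q ω)
    (h0β : ∀ ω, 0 ≤ β ω) (h0γ : ∀ ω, 0 ≤ γ ω) (h0η : ∀ ω, 0 ≤ η ω) (hI : ∀ ω, 0 ≤ I t ω)
    (hJ : 0 ≤ Jfun μ q I t) :
    ∫ ω, q ω * Dfun μ q β γ η f I t ω ∂μ ≤ C * μ.real univ * Jfun μ q I t := by
  have hpoint : ∀ᵐ ω ∂μ, q ω * Dfun μ q β γ η f I t ω ≤ C * Jfun μ q I t := by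
    filter_upwards [hηf] with ω hηfω
    calc q ω * Dfun μ q β γ η f I t ω ≤ q ω * (β ω * f ω * Jfun μ q I t) :=
          mul_le_mul_of_nonneg_left
            (Dfun_le_mul_Jfun hηfω (h0β ω) (h0γ ω) (h0η ω) (hI ω) hJ) (h0q ω)
      _ = q ω * β ω * f ω * Jfun μ q I t := by ring
      _ ≤ C * Jfun μ q I t := mul_le_mul_of_nonneg_right (hC ω) hJ
  calc _ ≤ C * Jfun μ q I t * μ.real univ := integral_le_of_le_const (mul_nonneg hC0 hJ) hpoint
    _ = C * μ.real univ * Jfun μ q I t := by ring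

namespace IsSolution

theorem Jfun_nonneg (hI : IsSolution μ q β γ η f I) (h0q : ∀ ω, 0 ≤ q ω) (ht : 0 ≤ t) :
    0 ≤ Jfun μ q I t :=
  integral_nonneg fun ω => mul_nonneg (h0q ω) (hI.2.1 t ht ω).1

theorem integrable_mul [IsFiniteMeasure μ] {M : ℝ} (hI : IsSolution μ q β γ η f I)
    (hmq : Measurable q) (h0q : ∀ ω, 0 ≤ q ω) (hbq : ∀ ω, q ω ≤ M) (hbf : ∀ ω, f ω ≤ M)
    (ht : 0 ≤ t) :
    Integrable (fun ω => q ω * I t ω) μ := by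
  refine .of_bound (hmq.mul (hI.1 t ht)).aestronglyMeasurable (M * M) (ae_of_all _ fun ω => ?_)
  obtain ⟨hI0, hIf⟩ := hI.2.1 t ht ω
  rw [Real.norm_eq_abs, abs_of_nonneg (mul_nonneg (h0q ω) hI0)]
  exact mul_le_mul (hbq ω) (hIf.trans (hbf ω)) hI0 ((h0q ω).trans (hbq ω))

end IsSolution

end SIS

theorem stmt_11_general
    {Ω : Type*} [MeasurableSpace Ω] (μ : Measure Ω) [IsProbabilityMeasure μ]
    (q β γ η f : Ω → ℝ)
    (hmq : Measurable q)
    (h0q : ∀ ω, 0 ≤ q ω) (h0β : ∀ ω, 0 ≤ β ω) (h0γ : ∀ ω, 0 ≤ γ ω)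
    (h0η : ∀ ω, 0 ≤ η ω) (h0f : ∀ ω, 0 ≤ f ω)
    (M : ℝ) (hbq : ∀ ω, q ω ≤ M) (hbβ : ∀ ω, β ω ≤ M)
    (hbf : ∀ ω, f ω ≤ M)
    (hqpos : ∀ᵐ ω ∂μ, 0 < q ω)
    (hηf : ∀ᵐ ω ∂μ, η ω * f ω = 0)
    (I : ℝ → Ω → ℝ) (hI : IsSolution μ q β γ η f I)
    (hI0 : ∀ᵐ ω ∂μ, I 0 ω = 0) :
    (∀ t, 0 ≤ t → Jfun μ q I t = 0) ∧
    (∀ t, 0 ≤ t → ∀ᵐ ω ∂μ, I t ω = 0) := by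
  have hM : 0 ≤ M := (h0q (nonempty_of_isProbabilityMeasure μ).some).trans (hbq _)
  have hqβf : ∀ ω, q ω * β ω * f ω ≤ M ^ 3 := fun ω => pow_three' M ▸
    mul_le_mul (mul_le_mul (hbq ω) (hbβ ω) (h0β ω) hM) (hbf ω) (h0f ω) (by positivity)
  have hJnn : ∀ t, 0 ≤ t → 0 ≤ Jfun μ q I t := fun t ht => hI.Jfun_nonneg h0q ht
  have hJ : ∀ t, 0 ≤ t → Jfun μ q I t = 0 := fun t ht =>
    le_antisymm (nonpos_of_hasDerivWithinAt_le_mul_self hI.2.2.2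
      (Jfun_eq_zero_of_ae_eq_zero hI0).le
      (fun s hs => integral_mul_Dfun_le_mul_Jfun (pow_nonneg hM 3) hqβf hηf h0q h0β h0γ h0η
        (fun ω => (hI.2.1 s hs ω).1) (hJnn s hs)) ht) (hJnn t ht)
  exact ⟨hJ, fun t ht => ae_eq_zero_of_Jfun_eq_zero (hI.integrable_mul hmq h0q hbq hbf ht) h0q
    (fun ω => (hI.2.1 t ht ω).1) hqpos (hJ t ht)⟩

/-- If `η f = 0` a.e. and `I(0,·) = 0` a.e., then `J(t) = 0` for all `t ≥ 0` and
`I(t,·) = 0` a.e. for each `t ≥ 0`. -/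
theorem stmt_11
    {Ω : Type*} [MeasurableSpace Ω] (μ : Measure Ω) [IsProbabilityMeasure μ]
    (q β γ η f : Ω → ℝ)
    (hmq : Measurable q) (hmβ : Measurable β) (hmγ : Measurable γ)
    (hmη : Measurable η) (hmf : Measurable f)
    (h0q : ∀ ω, 0 ≤ q ω) (h0β : ∀ ω, 0 ≤ β ω) (h0γ : ∀ ω, 0 ≤ γ ω)
    (h0η : ∀ ω, 0 ≤ η ω) (h0f : ∀ ω, 0 ≤ f ω)
    (M : ℝ) (hbq : ∀ ω, q ω ≤ M) (hbβ : ∀ ω, β ω ≤ M) (hbγ : ∀ ω, γ ω ≤ M)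
    (hbη : ∀ ω, η ω ≤ M) (hbf : ∀ ω, f ω ≤ M)
    (hfint : ∫ ω, f ω ∂μ = 1) (hqfint : ∫ ω, q ω * f ω ∂μ = 1)
    (hqpos : ∀ᵐ ω ∂μ, 0 < q ω)
    (ε : ℝ) (hε : 0 < ε) (hβε : ∀ ω, ε ≤ β ω) (hγε : ∀ ω, ε ≤ γ ω)
    (hηf : ∀ᵐ ω ∂μ, η ω * f ω = 0)
    (I : ℝ → Ω → ℝ) (hI : IsSolution μ q β γ η f I)
    (hI0 : ∀ᵐ ω ∂μ, I 0 ω = 0) :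
    (∀ t, 0 ≤ t → Jfun μ q I t = 0) ∧
    (∀ t, 0 ≤ t → ∀ᵐ ω ∂μ, I t ω = 0) :=
  stmt_11_general μ q β γ η f hmq h0q h0β h0γ h0η h0f M hbq hbβ hbf hqpos hηf I hI hI0
end

section
/- Suppose η(ω)f(ω) > 0 on a set of positive μ-measure, and let x* be the unique root in [0,1] of g(x) = ∫_Ω q(ω) f(ω) (β(ω)x + η(ω))/(β(ω)x + η(ω) + γ(ω)) dμ(ω) − x. Then every solution I of the heterogeneous SIS model satisfies lim_{t→∞} I(t,ω) = h(x*, ω) for every ω ∈ Ω, where h(x, ω) = f(ω)(β(ω)x + η(ω))/(β(ω)x + η(ω) + γ(ω)); i.e., the unique steady state is globally asymptotically attracting. -/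
/-!
For fixed `ω`, `I(·,ω)` solves a linear equation driven by `J`. If `J ≤ c` from time `T` on,
comparison with the equation in which `J` is frozen at `c` gives
`I(t,ω) ≤ h(c,ω) + f(ω) e^{-ε(t-T)}`, uniformly in `ω`; integrating against `q` gives
`J(t) ≤ Φ(c) + e^{-ε(t-T)}` with `Φ(c) = ∫ q h(c,·) dμ`, and symmetrically from below.
Hence `U = limsup J` and `L = liminf J` satisfy `g(U) ≥ 0 ≥ g(L)`. Since also
`g(0) ≥ 0 ≥ g(1)`, the intermediate value theorem and uniqueness of the root give
`U ≤ x* ≤ L`, so `J → x*`, and the same comparison then yields `I(t,ω) → h(x*,ω)`.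
-/

open MeasureTheory Filter Set Topology

variable {Ω : Type*} [MeasurableSpace Ω]

open Real

theorem image_le_of_hasDerivWithinAt_le_sub_mul {u u' : ℝ → ℝ} {A B T : ℝ} (hB : B ≠ 0)
    (hu : ∀ t ≥ T, HasDerivWithinAt u (u' t) (Ici T) t)
    (hle : ∀ t ≥ T, u' t ≤ A - B * u t) {t : ℝ} (ht : T ≤ t) :
    u t ≤ A / B + (u T - A / B) * exp (-B * (t - T)) := by
  have hcont : ContinuousOn u (Icc T t) := fun s hs =>
    (hu s hs.1).continuousWithinAt.mono Icc_subset_Ici_self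
  have hslope : ∀ s ∈ Ico T t, ∀ r, u' s < r → ∃ᶠ z in 𝓝[>] s, (z - s)⁻¹ * (u z - u s) < r :=
    fun s hs _ hr => ((hu s hs.1).mono (Ici_subset_Ici.2 hs.1)).liminf_right_slope_le hr
  have h := le_gronwallBound_of_liminf_deriv_right_le (K := -B) (ε := A) hcont hslope le_rfl
    (fun s hs => (hle s hs.1).trans_eq (by ring)) t ⟨ht, le_rfl⟩
  rw [gronwallBound_of_K_ne_0 (neg_ne_zero.2 hB)] at h
  convert h using 1
  field_simp
  ring

theorem le_image_of_hasDerivWithinAt_ge_sub_mul {u u' : ℝ → ℝ} {A B T : ℝ} (hB : B ≠ 0)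
    (hu : ∀ t ≥ T, HasDerivWithinAt u (u' t) (Ici T) t)
    (hle : ∀ t ≥ T, A - B * u t ≤ u' t) {t : ℝ} (ht : T ≤ t) :
    A / B + (u T - A / B) * exp (-B * (t - T)) ≤ u t := by
  have h := image_le_of_hasDerivWithinAt_le_sub_mul (u := -u) (u' := -u') (A := -A) hB
    (fun s hs => (hu s hs).neg) (fun s hs => by simp only [Pi.neg_apply]; linarith [hle s hs]) ht
  simp only [Pi.neg_apply, neg_div] at h
  linarith

theorem abs_mul_exp_le {x K B ε s : ℝ} (hx : |x| ≤ K) (hB : ε ≤ B) (hs : 0 ≤ s) :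
    |x * exp (-B * s)| ≤ K * exp (-ε * s) := by
  rw [abs_mul, abs_exp]
  exact mul_le_mul hx (exp_le_exp.2 (by nlinarith)) (exp_pos _).le ((abs_nonneg x).trans hx)

theorem eventually_mul_exp_lt {ε : ℝ} (hε : 0 < ε) (K T : ℝ) {δ : ℝ} (hδ : 0 < δ) :
    ∀ᶠ t in atTop, K * exp (-ε * (t - T)) < δ := by
  have h : Tendsto (fun t => -ε * (t - T)) atTop atBot :=
    (tendsto_atTop_add_const_right atTop (-T) tendsto_id).const_mul_atTop_of_neg (neg_lt_zero.2 hε)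
  have hδ' : K * 0 < δ := by rwa [mul_zero]
  exact ((tendsto_exp_atBot.comp h).const_mul K).eventually (gt_mem_nhds hδ')

theorem le_of_unique_zero_of_nonneg {g : ℝ → ℝ} {a b x u : ℝ} (hg : ContinuousOn g (Icc a b))
    (hb : g b ≤ 0) (hu : u ∈ Icc a b) (hgu : 0 ≤ g u) (huniq : ∀ y ∈ Icc a b, g y = 0 → y = x) :
    u ≤ x := by
  obtain ⟨y, hy, hgy⟩ :=
    intermediate_value_Icc' hu.2 (hg.mono (Icc_subset_Icc_left hu.1)) ⟨hb, hgu⟩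
  exact huniq y ⟨hu.1.trans hy.1, hy.2⟩ hgy ▸ hy.1

theorem ge_of_unique_zero_of_nonpos {g : ℝ → ℝ} {a b x u : ℝ} (hg : ContinuousOn g (Icc a b))
    (ha : 0 ≤ g a) (hu : u ∈ Icc a b) (hgu : g u ≤ 0) (huniq : ∀ y ∈ Icc a b, g y = 0 → y = x) :
    x ≤ u := by
  obtain ⟨y, hy, hgy⟩ :=
    intermediate_value_Icc' hu.1 (hg.mono (Icc_subset_Icc_right hu.2)) ⟨hgu, ha⟩
  exact huniq y ⟨hy.1, hy.2.trans hu.2⟩ hgy ▸ hy.2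

theorem exists_nonneg_forall_ge_of_eventually {p : ℝ → Prop} (h : ∀ᶠ t in atTop, p t) :
    ∃ T, 0 ≤ T ∧ ∀ t ≥ T, p t := by
  obtain ⟨T, hT⟩ := eventually_atTop.1 (h.and (eventually_ge_atTop 0))
  exact ⟨T, (hT T le_rfl).2, fun t ht => (hT t ht).1⟩

theorem hfun_eq_div {α : Type*} (β γ η f : α → ℝ) (x : ℝ) (ω : α) :
    hfun β γ η f x ω = (β ω * x + η ω) * f ω / (β ω * x + η ω + γ ω) := by
  unfold hfun
  ring

theorem hfun_mem_Icc {α : Type*} {β γ η f : α → ℝ} {x : ℝ} {ω : α} (hx : 0 ≤ x) (hβ : 0 ≤ β ω)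
    (hη : 0 ≤ η ω) (hγ : 0 ≤ γ ω) (hf : 0 ≤ f ω) : hfun β γ η f x ω ∈ Icc 0 (f ω) := by
  have hnum : 0 ≤ β ω * x + η ω := by positivity
  refine ⟨by unfold hfun; positivity, mul_le_of_le_one_right hf ?_⟩
  exact div_le_one_of_le₀ (by linarith) (by linarith)

theorem continuousOn_hfun {α : Type*} {β γ η f : α → ℝ} {ω : α} (hβ : 0 ≤ β ω) (hη : 0 ≤ η ω)
    (hγ : 0 < γ ω) : ContinuousOn (fun x => hfun β γ η f x ω) (Ici 0) := by
  unfold hfun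
  refine continuousOn_const.mul (ContinuousOn.div (by fun_prop) (by fun_prop) fun x hx => ?_)
  have : 0 ≤ β ω * x := mul_nonneg hβ hx
  positivity

/-- `Φ` of the proof sketch: `Jhfun x - x` is the function `g` of the theorem. -/
noncomputable def Jhfun (μ : Measure Ω) (q β γ η f : Ω → ℝ) (x : ℝ) : ℝ :=
  ∫ ω, q ω * hfun β γ η f x ω ∂μ

section SIS

variable {μ : Measure Ω} {q β γ η f : Ω → ℝ} {I : ℝ → Ω → ℝ}

/-- The right-hand side with `J` frozen at `c`, plus a correction with the sign of `J - c`. -/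
theorem Dfun_eq_sub_mul_add (c t : ℝ) (ω : Ω) :
    Dfun μ q β γ η f I t ω = (β ω * c + η ω) * f ω - (β ω * c + η ω + γ ω) * I t ω
      + β ω * (Jfun μ q I t - c) * (f ω - I t ω) := by
  unfold Dfun
  ring

namespace IsSolution

theorem mem_Icc (hI : IsSolution μ q β γ η f I) {t : ℝ} (ht : 0 ≤ t) (ω : Ω) :
    I t ω ∈ Icc 0 (f ω) :=
  hI.2.1 t ht ω

theorem hasDerivWithinAt (hI : IsSolution μ q β γ η f I) {T t : ℝ} (hT : 0 ≤ T) (ht : T ≤ t)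
    (ω : Ω) : HasDerivWithinAt (fun s => I s ω) (Dfun μ q β γ η f I t ω) (Ici T) t :=
  (hI.2.2.1 ω t (hT.trans ht)).mono (Ici_subset_Ici.2 hT)

theorem abs_sub_hfun_mul_exp_le (hI : IsSolution μ q β γ η f I) {ω : Ω} {ε c T t : ℝ}
    (hβ : 0 ≤ β ω) (hη : 0 ≤ η ω) (hε : 0 < ε) (hγ : ε ≤ γ ω) (hc : 0 ≤ c) (hT : 0 ≤ T)
    (ht : T ≤ t) :
    |(I T ω - hfun β γ η f c ω) * exp (-(β ω * c + η ω + γ ω) * (t - T))|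
      ≤ f ω * exp (-ε * (t - T)) := by
  have hI0 := hI.mem_Icc hT ω
  have hh := hfun_mem_Icc hc hβ hη (hε.le.trans hγ) (hI0.1.trans hI0.2) (f := f)
  exact abs_mul_exp_le (abs_sub_le_of_nonneg_of_le hI0.1 hI0.2 hh.1 hh.2)
    (by nlinarith [mul_nonneg hβ hc]) (sub_nonneg.2 ht)

theorem le_hfun_add_exp (hI : IsSolution μ q β γ η f I) {ω : Ω} {ε c T : ℝ}
    (hβ : 0 ≤ β ω) (hη : 0 ≤ η ω) (hε : 0 < ε) (hγ : ε ≤ γ ω) (hc : 0 ≤ c) (hT : 0 ≤ T)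
    (hJ : ∀ t ≥ T, Jfun μ q I t ≤ c) {t : ℝ} (ht : T ≤ t) :
    I t ω ≤ hfun β γ η f c ω + f ω * exp (-ε * (t - T)) := by
  have hode := image_le_of_hasDerivWithinAt_le_sub_mul (u := fun s => I s ω)
    (A := (β ω * c + η ω) * f ω) (B := β ω * c + η ω + γ ω) (by nlinarith [mul_nonneg hβ hc])
    (fun s hs => hI.hasDerivWithinAt hT hs ω)
    (fun s hs => by
      rw [Dfun_eq_sub_mul_add c]
      nlinarith [mul_nonneg hβ (sub_nonneg.2 (hJ s hs)), (hI.mem_Icc (hT.trans hs) ω).2]) ht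
  rw [← hfun_eq_div] at hode
  linarith [(abs_le.1 (hI.abs_sub_hfun_mul_exp_le hβ hη hε hγ hc hT ht)).2]

theorem hfun_sub_exp_le (hI : IsSolution μ q β γ η f I) {ω : Ω} {ε c T : ℝ}
    (hβ : 0 ≤ β ω) (hη : 0 ≤ η ω) (hε : 0 < ε) (hγ : ε ≤ γ ω) (hc : 0 ≤ c) (hT : 0 ≤ T)
    (hJ : ∀ t ≥ T, c ≤ Jfun μ q I t) {t : ℝ} (ht : T ≤ t) :
    hfun β γ η f c ω - f ω * exp (-ε * (t - T)) ≤ I t ω := by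
  have hode := le_image_of_hasDerivWithinAt_ge_sub_mul (u := fun s => I s ω)
    (A := (β ω * c + η ω) * f ω) (B := β ω * c + η ω + γ ω) (by nlinarith [mul_nonneg hβ hc])
    (fun s hs => hI.hasDerivWithinAt hT hs ω)
    (fun s hs => by
      rw [Dfun_eq_sub_mul_add c]
      nlinarith [mul_nonneg hβ (sub_nonneg.2 (hJ s hs)), (hI.mem_Icc (hT.trans hs) ω).2]) ht
  rw [← hfun_eq_div] at hode
  linarith [(abs_le.1 (hI.abs_sub_hfun_mul_exp_le hβ hη hε hγ hc hT ht)).1]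

end IsSolution

theorem norm_mul_le_mul_of_mem_Icc {a b c : ℝ} (ha : 0 ≤ a) (hb : b ∈ Icc 0 c) :
    ‖a * b‖ ≤ a * c := by
  rw [Real.norm_eq_abs, abs_of_nonneg (mul_nonneg ha hb.1)]
  exact mul_le_mul_of_nonneg_left hb.2 ha

theorem integrable_mul_of_mem_Icc {q φ f : Ω → ℝ}
    (hqf : Integrable (fun ω => q ω * f ω) μ) (hφ : AEStronglyMeasurable (fun ω => q ω * φ ω) μ)
    (hq : ∀ ω, 0 ≤ q ω) (hφf : ∀ ω, φ ω ∈ Icc 0 (f ω)) : Integrable (fun ω => q ω * φ ω) μ :=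
  hqf.mono' hφ <| ae_of_all _ fun ω => norm_mul_le_mul_of_mem_Icc (hq ω) (hφf ω)

theorem integral_mul_mem_Icc {q φ f : Ω → ℝ} (hqf : ∫ ω, q ω * f ω ∂μ = 1)
    (hφ : AEStronglyMeasurable (fun ω => q ω * φ ω) μ) (hq : ∀ ω, 0 ≤ q ω)
    (hφf : ∀ ω, φ ω ∈ Icc 0 (f ω)) : ∫ ω, q ω * φ ω ∂μ ∈ Icc 0 1 := by
  have hqfi : Integrable (fun ω => q ω * f ω) μ := .of_integral_ne_zero (by simp [hqf])
  refine ⟨integral_nonneg fun ω => mul_nonneg (hq ω) (hφf ω).1, hqf ▸ integral_mono ?_ hqfi ?_⟩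
  · exact integrable_mul_of_mem_Icc hqfi hφ hq hφf
  · exact fun ω => mul_le_mul_of_nonneg_left (hφf ω).2 (hq ω)

structure SISAssumptions (μ : Measure Ω) (q β γ η f : Ω → ℝ) (ε : ℝ) : Prop where
  measurable_q : Measurable q
  measurable_β : Measurable β
  measurable_γ : Measurable γ
  measurable_η : Measurable η
  measurable_f : Measurable f
  q_nonneg : ∀ ω, 0 ≤ q ω
  β_nonneg : ∀ ω, 0 ≤ β ω
  η_nonneg : ∀ ω, 0 ≤ η ω
  f_nonneg : ∀ ω, 0 ≤ f ω
  ε_pos : 0 < ε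
  ε_le_γ : ∀ ω, ε ≤ γ ω
  integral_q_mul_f : ∫ ω, q ω * f ω ∂μ = 1

namespace SISAssumptions

variable {ε : ℝ}

theorem integrable_q_mul_f (hP : SISAssumptions μ q β γ η f ε) :
    Integrable (fun ω => q ω * f ω) μ :=
  .of_integral_ne_zero (by simp [hP.integral_q_mul_f])

theorem hfun_mem_Icc (hP : SISAssumptions μ q β γ η f ε) {x : ℝ} (hx : 0 ≤ x) (ω : Ω) :
    hfun β γ η f x ω ∈ Icc 0 (f ω) :=
  _root_.hfun_mem_Icc hx (hP.β_nonneg ω) (hP.η_nonneg ω) (hP.ε_pos.le.trans (hP.ε_le_γ ω))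
    (hP.f_nonneg ω)

theorem aestronglyMeasurable_q_mul_hfun (hP : SISAssumptions μ q β γ η f ε) (x : ℝ) :
    AEStronglyMeasurable (fun ω => q ω * hfun β γ η f x ω) μ := by
  have := hP.measurable_q; have := hP.measurable_β; have := hP.measurable_γ
  have := hP.measurable_η; have := hP.measurable_f
  unfold hfun
  fun_prop

theorem Jhfun_mem_Icc (hP : SISAssumptions μ q β γ η f ε) {x : ℝ} (hx : 0 ≤ x) :
    Jhfun μ q β γ η f x ∈ Icc 0 1 :=
  integral_mul_mem_Icc hP.integral_q_mul_f (hP.aestronglyMeasurable_q_mul_hfun x) hP.q_nonneg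
    (hP.hfun_mem_Icc hx)

theorem continuousOn_Jhfun (hP : SISAssumptions μ q β γ η f ε) :
    ContinuousOn (Jhfun μ q β γ η f) (Ici 0) := by
  refine continuousOn_of_dominated (fun x _ => hP.aestronglyMeasurable_q_mul_hfun x)
    (fun x hx => ae_of_all _ fun ω => norm_mul_le_mul_of_mem_Icc (hP.q_nonneg ω)
      (hP.hfun_mem_Icc hx ω)) hP.integrable_q_mul_f (ae_of_all _ fun ω => ?_)
  exact continuousOn_const.mul (continuousOn_hfun (hP.β_nonneg ω) (hP.η_nonneg ω)
      (hP.ε_pos.trans_le (hP.ε_le_γ ω)))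

end SISAssumptions

namespace IsSolution

variable {ε : ℝ}

theorem Jfun_mem_Icc (hI : IsSolution μ q β γ η f I) (hP : SISAssumptions μ q β γ η f ε) {t : ℝ}
    (ht : 0 ≤ t) : Jfun μ q I t ∈ Icc 0 1 :=
  integral_mul_mem_Icc hP.integral_q_mul_f
    (hP.measurable_q.mul (hI.1 t ht)).aestronglyMeasurable hP.q_nonneg (hI.mem_Icc ht)

theorem integrable_q_mul (hI : IsSolution μ q β γ η f I) (hP : SISAssumptions μ q β γ η f ε)
    {t : ℝ} (ht : 0 ≤ t) : Integrable (fun ω => q ω * I t ω) μ :=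
  integrable_mul_of_mem_Icc hP.integrable_q_mul_f
    (hP.measurable_q.mul (hI.1 t ht)).aestronglyMeasurable hP.q_nonneg (hI.mem_Icc ht)

theorem Jfun_le_Jhfun_add_exp (hI : IsSolution μ q β γ η f I)
    (hP : SISAssumptions μ q β γ η f ε) {c T : ℝ} (hc : 0 ≤ c) (hT : 0 ≤ T)
    (hJ : ∀ t ≥ T, Jfun μ q I t ≤ c) {t : ℝ} (ht : T ≤ t) :
    Jfun μ q I t ≤ Jhfun μ q β γ η f c + exp (-ε * (t - T)) := by
  have hh := integrable_mul_of_mem_Icc hP.integrable_q_mul_f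
    (hP.aestronglyMeasurable_q_mul_hfun c) hP.q_nonneg (hP.hfun_mem_Icc hc)
  have hqf := hP.integrable_q_mul_f.mul_const (exp (-ε * (t - T)))
  calc Jfun μ q I t
      ≤ ∫ ω, (q ω * hfun β γ η f c ω + q ω * f ω * exp (-ε * (t - T))) ∂μ := by
        refine integral_mono (hI.integrable_q_mul hP (hT.trans ht)) (hh.add hqf) fun ω => ?_
        have := hI.le_hfun_add_exp (hP.β_nonneg ω) (hP.η_nonneg ω) hP.ε_pos (hP.ε_le_γ ω) hc hT
          hJ ht
        nlinarith [hP.q_nonneg ω]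
    _ = Jhfun μ q β γ η f c + exp (-ε * (t - T)) := by
        rw [integral_add hh hqf, integral_mul_const, hP.integral_q_mul_f, one_mul, Jhfun]

theorem Jhfun_sub_exp_le_Jfun (hI : IsSolution μ q β γ η f I)
    (hP : SISAssumptions μ q β γ η f ε) {c T : ℝ} (hc : 0 ≤ c) (hT : 0 ≤ T)
    (hJ : ∀ t ≥ T, c ≤ Jfun μ q I t) {t : ℝ} (ht : T ≤ t) :
    Jhfun μ q β γ η f c - exp (-ε * (t - T)) ≤ Jfun μ q I t := by
  have hh := integrable_mul_of_mem_Icc hP.integrable_q_mul_f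
    (hP.aestronglyMeasurable_q_mul_hfun c) hP.q_nonneg (hP.hfun_mem_Icc hc)
  have hqf := hP.integrable_q_mul_f.mul_const (exp (-ε * (t - T)))
  calc Jhfun μ q β γ η f c - exp (-ε * (t - T))
      = ∫ ω, (q ω * hfun β γ η f c ω - q ω * f ω * exp (-ε * (t - T))) ∂μ := by
        rw [integral_sub hh hqf, integral_mul_const, hP.integral_q_mul_f, one_mul, Jhfun]
    _ ≤ Jfun μ q I t := by
        refine integral_mono (hh.sub hqf) (hI.integrable_q_mul hP (hT.trans ht)) fun ω => ?_
        have := hI.hfun_sub_exp_le (hP.β_nonneg ω) (hP.η_nonneg ω) hP.ε_pos (hP.ε_le_γ ω) hc hT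
          hJ ht
        nlinarith [hP.q_nonneg ω]

theorem eventually_le_hfun_add (hI : IsSolution μ q β γ η f I)
    (hP : SISAssumptions μ q β γ η f ε) {c : ℝ} (hc : 0 ≤ c)
    (hJ : ∀ᶠ t in atTop, Jfun μ q I t ≤ c) (ω : Ω) {δ : ℝ} (hδ : 0 < δ) :
    ∀ᶠ t in atTop, I t ω ≤ hfun β γ η f c ω + δ := by
  obtain ⟨T, hT, hJT⟩ := exists_nonneg_forall_ge_of_eventually hJ
  filter_upwards [eventually_ge_atTop T, eventually_mul_exp_lt hP.ε_pos (f ω) T hδ] with t ht hexp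
  linarith [hI.le_hfun_add_exp (hP.β_nonneg ω) (hP.η_nonneg ω) hP.ε_pos (hP.ε_le_γ ω) hc hT hJT ht]

theorem eventually_hfun_sub_le (hI : IsSolution μ q β γ η f I)
    (hP : SISAssumptions μ q β γ η f ε) {c : ℝ} (hc : 0 ≤ c)
    (hJ : ∀ᶠ t in atTop, c ≤ Jfun μ q I t) (ω : Ω) {δ : ℝ} (hδ : 0 < δ) :
    ∀ᶠ t in atTop, hfun β γ η f c ω - δ ≤ I t ω := by
  obtain ⟨T, hT, hJT⟩ := exists_nonneg_forall_ge_of_eventually hJ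
  filter_upwards [eventually_ge_atTop T, eventually_mul_exp_lt hP.ε_pos (f ω) T hδ] with t ht hexp
  linarith [hI.hfun_sub_exp_le (hP.β_nonneg ω) (hP.η_nonneg ω) hP.ε_pos (hP.ε_le_γ ω) hc hT hJT ht]

theorem eventually_Jfun_le_Jhfun_add (hI : IsSolution μ q β γ η f I)
    (hP : SISAssumptions μ q β γ η f ε) {c : ℝ} (hc : 0 ≤ c)
    (hJ : ∀ᶠ t in atTop, Jfun μ q I t ≤ c) {δ : ℝ} (hδ : 0 < δ) :
    ∀ᶠ t in atTop, Jfun μ q I t ≤ Jhfun μ q β γ η f c + δ := by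
  obtain ⟨T, hT, hJT⟩ := exists_nonneg_forall_ge_of_eventually hJ
  filter_upwards [eventually_ge_atTop T, eventually_mul_exp_lt hP.ε_pos 1 T hδ] with t ht hexp
  linarith [hI.Jfun_le_Jhfun_add_exp hP hc hT hJT ht]

theorem eventually_Jhfun_sub_le_Jfun (hI : IsSolution μ q β γ η f I)
    (hP : SISAssumptions μ q β γ η f ε) {c : ℝ} (hc : 0 ≤ c)
    (hJ : ∀ᶠ t in atTop, c ≤ Jfun μ q I t) {δ : ℝ} (hδ : 0 < δ) :
    ∀ᶠ t in atTop, Jhfun μ q β γ η f c - δ ≤ Jfun μ q I t := by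
  obtain ⟨T, hT, hJT⟩ := exists_nonneg_forall_ge_of_eventually hJ
  filter_upwards [eventually_ge_atTop T, eventually_mul_exp_lt hP.ε_pos 1 T hδ] with t ht hexp
  linarith [hI.Jhfun_sub_exp_le_Jfun hP hc hT hJT ht]

theorem eventually_Jfun_mem_Icc (hI : IsSolution μ q β γ η f I)
    (hP : SISAssumptions μ q β γ η f ε) : ∀ᶠ t in atTop, Jfun μ q I t ∈ Icc 0 1 :=
  (eventually_ge_atTop 0).mono fun _ ht => hI.Jfun_mem_Icc hP ht

theorem isBoundedUnder_le_Jfun (hI : IsSolution μ q β γ η f I)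
    (hP : SISAssumptions μ q β γ η f ε) : IsBoundedUnder (· ≤ ·) atTop (Jfun μ q I) :=
  isBoundedUnder_of_eventually_le ((hI.eventually_Jfun_mem_Icc hP).mono fun _ h => h.2)

theorem isBoundedUnder_ge_Jfun (hI : IsSolution μ q β γ η f I)
    (hP : SISAssumptions μ q β γ η f ε) : IsBoundedUnder (· ≥ ·) atTop (Jfun μ q I) :=
  isBoundedUnder_of_eventually_ge ((hI.eventually_Jfun_mem_Icc hP).mono fun _ h => h.1)

theorem limsup_Jfun_le_Jhfun (hI : IsSolution μ q β γ η f I)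
    (hP : SISAssumptions μ q β γ η f ε) :
    limsup (Jfun μ q I) atTop ≤ Jhfun μ q β γ η f (limsup (Jfun μ q I) atTop) := by
  set U := limsup (Jfun μ q I) atTop
  have hU : 0 ≤ U := le_limsup_of_frequently_le
    ((hI.eventually_Jfun_mem_Icc hP).mono fun _ h => h.1).frequently (hI.isBoundedUnder_le_Jfun hP)
  refine ge_of_tendsto ((hP.continuousOn_Jhfun U hU).mono (Ioi_subset_Ici hU))
    (eventually_nhdsWithin_of_forall fun c (hc : U < c) => ?_)
  refine le_of_forall_pos_le_add fun δ hδ =>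
    limsup_le_of_le (hI.isBoundedUnder_ge_Jfun hP).isCoboundedUnder_le ?_
  exact hI.eventually_Jfun_le_Jhfun_add hP (hU.trans hc.le)
    ((eventually_lt_of_limsup_lt hc (hI.isBoundedUnder_le_Jfun hP)).mono fun _ => le_of_lt) hδ

theorem Jhfun_liminf_Jfun_le (hI : IsSolution μ q β γ η f I)
    (hP : SISAssumptions μ q β γ η f ε) :
    Jhfun μ q β γ η f (liminf (Jfun μ q I) atTop) ≤ liminf (Jfun μ q I) atTop := by
  set L := liminf (Jfun μ q I) atTop
  have hJ := hI.eventually_Jfun_mem_Icc hP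
  have hL : 0 ≤ L :=
    le_liminf_of_le (hI.isBoundedUnder_le_Jfun hP).isCoboundedUnder_ge (hJ.mono fun _ h => h.1)
  have hF : Tendsto (fun c => Jhfun μ q β γ η f (max c 0)) (𝓝 L) (𝓝 (Jhfun μ q β γ η f L)) := by
    simpa [Function.comp_def, max_eq_left hL] using (hP.continuousOn_Jhfun.comp_continuous
      (continuous_id.max continuous_const) fun c => le_max_right c 0).tendsto L
  refine le_of_tendsto (hF.mono_left nhdsWithin_le_nhds)
    (eventually_nhdsWithin_of_forall (s := Iio L) fun c hc => ?_)
  refine le_of_forall_pos_le_add fun δ hδ => ?_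
  have hcJ : ∀ᶠ t in atTop, max c 0 ≤ Jfun μ q I t :=
    ((eventually_lt_of_lt_liminf hc (hI.isBoundedUnder_ge_Jfun hP)).and hJ).mono
      fun _ h => max_le h.1.le h.2.1
  have := le_liminf_of_le (hI.isBoundedUnder_le_Jfun hP).isCoboundedUnder_ge
    (hI.eventually_Jhfun_sub_le_Jfun hP (le_max_right c 0) hcJ hδ)
  linarith

theorem tendsto_Jfun (hI : IsSolution μ q β γ η f I) (hP : SISAssumptions μ q β γ η f ε)
    {g : ℝ → ℝ} (hg : ∀ x, g x = Jhfun μ q β γ η f x - x) {x : ℝ}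
    (hx : ∀ y ∈ Icc (0 : ℝ) 1, g y = 0 → y = x) : Tendsto (Jfun μ q I) atTop (𝓝 x) := by
  have hJ := hI.eventually_Jfun_mem_Icc hP
  have hbdd := hI.isBoundedUnder_le_Jfun hP
  have hbdd' := hI.isBoundedUnder_ge_Jfun hP
  have hL0 : 0 ≤ liminf (Jfun μ q I) atTop :=
    le_liminf_of_le hbdd.isCoboundedUnder_ge (hJ.mono fun _ h => h.1)
  have hU1 : limsup (Jfun μ q I) atTop ≤ 1 :=
    limsup_le_of_le hbdd'.isCoboundedUnder_le (hJ.mono fun _ h => h.2)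
  have hLU : liminf (Jfun μ q I) atTop ≤ limsup (Jfun μ q I) atTop := liminf_le_limsup hbdd hbdd'
  have hgc : ContinuousOn g (Icc 0 1) :=
    ((hP.continuousOn_Jhfun.mono Icc_subset_Ici_self).sub continuousOn_id).congr fun y _ => hg y
  have hUx : limsup (Jfun μ q I) atTop ≤ x := by
    refine le_of_unique_zero_of_nonneg hgc ?_ ⟨hL0.trans hLU, hU1⟩ ?_ hx
    · linarith [hg 1, (hP.Jhfun_mem_Icc zero_le_one).2]
    · linarith [hg (limsup (Jfun μ q I) atTop), hI.limsup_Jfun_le_Jhfun hP]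
  have hxL : x ≤ liminf (Jfun μ q I) atTop := by
    refine ge_of_unique_zero_of_nonpos hgc ?_ ⟨hL0, hLU.trans hU1⟩ ?_ hx
    · linarith [hg 0, (hP.Jhfun_mem_Icc le_rfl).1]
    · linarith [hg (liminf (Jfun μ q I) atTop), hI.Jhfun_liminf_Jfun_le hP]
  exact tendsto_of_liminf_eq_limsup (by linarith) (by linarith) hbdd hbdd'

theorem tendsto_of_tendsto_Jfun (hI : IsSolution μ q β γ η f I)
    (hP : SISAssumptions μ q β γ η f ε) {x : ℝ} (hJ : Tendsto (Jfun μ q I) atTop (𝓝 x))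
    (ω : Ω) : Tendsto (fun t => I t ω) atTop (𝓝 (hfun β γ η f x ω)) := by
  have hJ0 : ∀ᶠ t in atTop, 0 ≤ Jfun μ q I t :=
    (hI.eventually_Jfun_mem_Icc hP).mono fun _ h => h.1
  have hx : 0 ≤ x := ge_of_tendsto hJ hJ0
  have hG : Tendsto (fun c => hfun β γ η f (max c 0) ω) (𝓝 x) (𝓝 (hfun β γ η f x ω)) := by
    simpa [Function.comp_def, max_eq_left hx] using ((continuousOn_hfun (hP.β_nonneg ω)
      (hP.η_nonneg ω) (hP.ε_pos.trans_le (hP.ε_le_γ ω))).comp_continuous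
      (continuous_id.max continuous_const) fun c => le_max_right c 0).tendsto x
  refine tendsto_order.2 ⟨fun a ha => ?_, fun b hb => ?_⟩
  · obtain ⟨c, hcx, hc⟩ := (hG.eventually (lt_mem_nhds ha)).exists_lt
    have hcJ : ∀ᶠ t in atTop, max c 0 ≤ Jfun μ q I t :=
      ((hJ.eventually (lt_mem_nhds hcx)).and hJ0).mono fun _ h => max_le h.1.le h.2
    filter_upwards [hI.eventually_hfun_sub_le hP (le_max_right c 0) hcJ ω
      (half_pos (sub_pos.2 hc))] with t ht
    linarith
  · obtain ⟨c, hxc, hc⟩ := (hG.eventually (gt_mem_nhds hb)).exists_gt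
    rw [max_eq_left (hx.trans hxc.le)] at hc
    filter_upwards [hI.eventually_le_hfun_add hP (hx.trans hxc.le)
      ((hJ.eventually (gt_mem_nhds hxc)).mono fun _ => le_of_lt) ω
      (half_pos (sub_pos.2 hc))] with t ht
    linarith

end IsSolution

end SIS

theorem stmt_12_general
    {Ω : Type*} [MeasurableSpace Ω] (μ : Measure Ω)
    (q β γ η f : Ω → ℝ)
    (hmq : Measurable q) (hmβ : Measurable β) (hmγ : Measurable γ)
    (hmη : Measurable η) (hmf : Measurable f)
    (h0q : ∀ ω, 0 ≤ q ω) (h0β : ∀ ω, 0 ≤ β ω)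
    (h0η : ∀ ω, 0 ≤ η ω) (h0f : ∀ ω, 0 ≤ f ω)
    (hqfint : ∫ ω, q ω * f ω ∂μ = 1)
    (ε : ℝ) (hε : 0 < ε) (hγε : ∀ ω, ε ≤ γ ω)
    (g : ℝ → ℝ)
    (hgdef : ∀ x, g x =
      (∫ ω, q ω * f ω * ((β ω * x + η ω) / (β ω * x + η ω + γ ω)) ∂μ) - x)
    (xstar : ℝ)
    (hxuniq : ∀ y ∈ Icc (0:ℝ) 1, g y = 0 → y = xstar)
    (I : ℝ → Ω → ℝ) (hI : IsSolution μ q β γ η f I) :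
    ∀ ω, Tendsto (fun t => I t ω) atTop (𝓝 (hfun β γ η f xstar ω)) := by
  have hP : SISAssumptions μ q β γ η f ε :=
    ⟨hmq, hmβ, hmγ, hmη, hmf, h0q, h0β, h0η, h0f, hε, hγε, hqfint⟩
  have hg : ∀ x, g x = Jhfun μ q β γ η f x - x := fun x => by
    simp only [hgdef, Jhfun, hfun, mul_assoc]
  exact hI.tendsto_of_tendsto_Jfun hP (hI.tendsto_Jfun hP hg hxuniq)

/-- If `η f > 0` on a set of positive measure and `x*` is the unique root of `g` in
`[0,1]`, then every solution satisfies `I(t,ω) → h(x*,ω)` for every `ω`. -/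
theorem stmt_12
    {Ω : Type*} [MeasurableSpace Ω] (μ : Measure Ω) [IsProbabilityMeasure μ]
    (q β γ η f : Ω → ℝ)
    (hmq : Measurable q) (hmβ : Measurable β) (hmγ : Measurable γ)
    (hmη : Measurable η) (hmf : Measurable f)
    (h0q : ∀ ω, 0 ≤ q ω) (h0β : ∀ ω, 0 ≤ β ω) (h0γ : ∀ ω, 0 ≤ γ ω)
    (h0η : ∀ ω, 0 ≤ η ω) (h0f : ∀ ω, 0 ≤ f ω)
    (M : ℝ) (hbq : ∀ ω, q ω ≤ M) (hbβ : ∀ ω, β ω ≤ M) (hbγ : ∀ ω, γ ω ≤ M)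
    (hbη : ∀ ω, η ω ≤ M) (hbf : ∀ ω, f ω ≤ M)
    (hfint : ∫ ω, f ω ∂μ = 1) (hqfint : ∫ ω, q ω * f ω ∂μ = 1)
    (hqpos : ∀ᵐ ω ∂μ, 0 < q ω)
    (ε : ℝ) (hε : 0 < ε) (hβε : ∀ ω, ε ≤ β ω) (hγε : ∀ ω, ε ≤ γ ω)
    (g : ℝ → ℝ)
    (hgdef : ∀ x, g x =
      (∫ ω, q ω * f ω * ((β ω * x + η ω) / (β ω * x + η ω + γ ω)) ∂μ) - x)
    (hηf : 0 < μ {ω | 0 < η ω * f ω})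
    (xstar : ℝ) (hx : xstar ∈ Icc (0:ℝ) 1) (hgx : g xstar = 0)
    (hxuniq : ∀ y ∈ Icc (0:ℝ) 1, g y = 0 → y = xstar)
    (I : ℝ → Ω → ℝ) (hI : IsSolution μ q β γ η f I) :
    ∀ ω, Tendsto (fun t => I t ω) atTop (𝓝 (hfun β γ η f xstar ω)) :=
  stmt_12_general μ q β γ η f hmq hmβ hmγ hmη hmf h0q h0β h0η h0f hqfint ε hε hγε g hgdef xstar
    hxuniq I hI
end

section
/- Suppose η(ω)f(ω) = 0 for μ-a.e. ω, and let I be a solution of the heterogeneous SIS model. Then for every t ≥ 0 with J(t) > 0, the following equivalence holds: ∫_Ω q(ω) (β(ω)/γ(ω)) I(t,ω) dμ(ω) < R₀ − 1 if and only if ∫_Ω (q(ω)/γ(ω)) ∂I/∂t(t,ω) dμ(ω) > 0, where R₀ = ∫_Ω q(ω) f(ω) β(ω)/γ(ω) dμ(ω). -/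
/-!
Where `η f = 0`, the constraint `0 ≤ I ≤ f` forces `η I = 0` as well, so a.e.
`∂I/∂t = β J (f - I) - γ I`. Weighting by `q / γ` and integrating gives
`∫ (q/γ) ∂I/∂t = J (R₀ - ∫ q (β/γ) I - 1)`, and `J(t) > 0` makes both sides of the
equivalence say that the last factor is positive.
-/

open MeasureTheory Filter Set Topology

variable {Ω : Type*} [MeasurableSpace Ω]

lemma memLp_top_of_nonneg_of_le {μ : Measure Ω} {g : Ω → ℝ} {C : ℝ} (hg : Measurable g)
    (h0 : ∀ ω, 0 ≤ g ω) (hC : ∀ ω, g ω ≤ C) : MemLp g ⊤ μ :=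
  memLp_top_of_bound hg.aestronglyMeasurable C <|
    .of_forall fun ω => (Real.norm_of_nonneg (h0 ω)).trans_le (hC ω)

section
variable {μ : Measure Ω} {q β γ η f : Ω → ℝ} {I : ℝ → Ω → ℝ} {t : ℝ}

lemma Dfun_eq_of_mul_eq_zero {ω : Ω} (hηf : η ω * f ω = 0) (hI0 : 0 ≤ I t ω)
    (hIf : I t ω ≤ f ω) :
    Dfun μ q β γ η f I t ω = β ω * Jfun μ q I t * (f ω - I t ω) - γ ω * I t ω := by
  have hηI : η ω * I t ω = 0 := by
    rcases mul_eq_zero.1 hηf with h | h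
    · simp [h]
    · simp [le_antisymm (hIf.trans h.le) hI0]
  unfold Dfun
  linear_combination hηf - hηI

lemma integral_div_mul_Dfun (hγ : ∀ ω, γ ω ≠ 0) (hηf : ∀ᵐ ω ∂μ, η ω * f ω = 0)
    (hI : ∀ ω, 0 ≤ I t ω ∧ I t ω ≤ f ω)
    (hf_int : Integrable (fun ω => q ω * f ω * (β ω / γ ω)) μ)
    (hI_int : Integrable (fun ω => q ω * (β ω / γ ω) * I t ω) μ)
    (hqI_int : Integrable (fun ω => q ω * I t ω) μ) :
    ∫ ω, q ω / γ ω * Dfun μ q β γ η f I t ω ∂μ =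
      Jfun μ q I t * ((∫ ω, q ω * f ω * (β ω / γ ω) ∂μ) -
        (∫ ω, q ω * (β ω / γ ω) * I t ω ∂μ) - 1) := by
  set J := Jfun μ q I t
  have hpointwise : (fun ω => q ω / γ ω * Dfun μ q β γ η f I t ω) =ᵐ[μ]
      fun ω => J * (q ω * f ω * (β ω / γ ω)) - J * (q ω * (β ω / γ ω) * I t ω) -
        q ω * I t ω := by
    filter_upwards [hηf] with ω hω
    rw [Dfun_eq_of_mul_eq_zero hω (hI ω).1 (hI ω).2]
    field_simp [hγ ω]
    ring
  rw [integral_congr_ae hpointwise, integral_sub, integral_sub, integral_const_mul,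
    integral_const_mul]
  · change _ - _ - J = _
    ring
  all_goals fun_prop

end

theorem stmt_16_general
    {Ω : Type*} [MeasurableSpace Ω] (μ : Measure Ω) [IsProbabilityMeasure μ]
    (q β γ η f : Ω → ℝ)
    (hmq : Measurable q) (hmβ : Measurable β) (hmγ : Measurable γ)
    (hmf : Measurable f)
    (h0q : ∀ ω, 0 ≤ q ω) (h0β : ∀ ω, 0 ≤ β ω)
    (h0f : ∀ ω, 0 ≤ f ω)
    (M : ℝ) (hbq : ∀ ω, q ω ≤ M) (hbβ : ∀ ω, β ω ≤ M)
    (hbf : ∀ ω, f ω ≤ M)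
    (ε : ℝ) (hε : 0 < ε) (hγε : ∀ ω, ε ≤ γ ω)
    (hηf : ∀ᵐ ω ∂μ, η ω * f ω = 0)
    (R₀ : ℝ) (hR₀ : R₀ = ∫ ω, q ω * f ω * (β ω / γ ω) ∂μ)
    (I : ℝ → Ω → ℝ) (hI : IsSolution μ q β γ η f I) :
    ∀ t, 0 ≤ t → 0 < Jfun μ q I t →
      ((∫ ω, q ω * (β ω / γ ω) * I t ω ∂μ) < R₀ - 1 ↔
        0 < ∫ ω, (q ω / γ ω) * Dfun μ q β γ η f I t ω ∂μ) := by
  intro t ht hJ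
  obtain ⟨hmI, hIf, -, -⟩ := hI
  have hγ : ∀ ω, 0 < γ ω := fun ω => hε.trans_le (hγε ω)
  have hq : MemLp q ⊤ μ := memLp_top_of_nonneg_of_le hmq h0q hbq
  have hf : MemLp f ⊤ μ := memLp_top_of_nonneg_of_le hmf h0f hbf
  have hβγ : MemLp (fun ω => β ω / γ ω) ⊤ μ :=
    memLp_top_of_nonneg_of_le (hmβ.div hmγ) (fun ω => div_nonneg (h0β ω) (hγ ω).le)
      fun ω => div_le_div₀ ((h0β ω).trans (hbβ ω)) (hbβ ω) hε (hγε ω)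
  have hIt : MemLp (I t) ⊤ μ := memLp_top_of_nonneg_of_le (hmI t ht) (fun ω => (hIf t ht ω).1)
    fun ω => (hIf t ht ω).2.trans (hbf ω)
  rw [integral_div_mul_Dfun (fun ω => (hγ ω).ne') hηf (hIf t ht)
    ((hβγ.mul' (hf.mul' hq (r := ⊤)) (r := ⊤)).integrable le_top)
    ((hIt.mul' (hβγ.mul' hq (r := ⊤)) (r := ⊤)).integrable le_top)
    ((hIt.mul' hq (r := ⊤)).integrable le_top), ← hR₀, mul_pos_iff_of_pos_left hJ,
    sub_right_comm, sub_pos]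

/-- If `η f = 0` a.e. then for every solution and every `t ≥ 0` with `J(t) > 0`:
`∫ q (β/γ) I(t,·) dμ < R₀ − 1` iff `∫ (q/γ) ∂I/∂t(t,·) dμ > 0`. -/
theorem stmt_16
    {Ω : Type*} [MeasurableSpace Ω] (μ : Measure Ω) [IsProbabilityMeasure μ]
    (q β γ η f : Ω → ℝ)
    (hmq : Measurable q) (hmβ : Measurable β) (hmγ : Measurable γ)
    (hmη : Measurable η) (hmf : Measurable f)
    (h0q : ∀ ω, 0 ≤ q ω) (h0β : ∀ ω, 0 ≤ β ω) (h0γ : ∀ ω, 0 ≤ γ ω)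
    (h0η : ∀ ω, 0 ≤ η ω) (h0f : ∀ ω, 0 ≤ f ω)
    (M : ℝ) (hbq : ∀ ω, q ω ≤ M) (hbβ : ∀ ω, β ω ≤ M) (hbγ : ∀ ω, γ ω ≤ M)
    (hbη : ∀ ω, η ω ≤ M) (hbf : ∀ ω, f ω ≤ M)
    (hfint : ∫ ω, f ω ∂μ = 1) (hqfint : ∫ ω, q ω * f ω ∂μ = 1)
    (hqpos : ∀ᵐ ω ∂μ, 0 < q ω)
    (ε : ℝ) (hε : 0 < ε) (hβε : ∀ ω, ε ≤ β ω) (hγε : ∀ ω, ε ≤ γ ω)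
    (hηf : ∀ᵐ ω ∂μ, η ω * f ω = 0)
    (R₀ : ℝ) (hR₀ : R₀ = ∫ ω, q ω * f ω * (β ω / γ ω) ∂μ)
    (I : ℝ → Ω → ℝ) (hI : IsSolution μ q β γ η f I) :
    ∀ t, 0 ≤ t → 0 < Jfun μ q I t →
      ((∫ ω, q ω * (β ω / γ ω) * I t ω ∂μ) < R₀ - 1 ↔
        0 < ∫ ω, (q ω / γ ω) * Dfun μ q β γ η f I t ω ∂μ) :=
  stmt_16_general μ q β γ η f hmq hmβ hmγ hmf h0q h0β h0f M hbq hbβ hbf ε hε hγε hηf R₀ hR₀ I hI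
end

section
/- Let λ ∈ ℝ and let ζ ∈ L²(Ω, μ) with ζ ≠ 0 satisfy Tζ = λζ. Then: (i) if ∫_Ω q ζ dμ = 0, then (γ(ω) + λ) ζ(ω) = 0 for μ-a.e. ω; (ii) if ∫_Ω q ζ dμ ≠ 0 and γ(ω) + λ ≠ 0 for μ-a.e. ω, then ζ(ω) = (∫_Ω q ζ dμ) · f(ω)β(ω)/(γ(ω) + λ) for μ-a.e. ω and ∫_Ω q(ω) f(ω) β(ω)/(γ(ω) + λ) dμ(ω) = 1. -/
open MeasureTheory Filter Set Topology

/-- Integrating `ζ = c * g` against `q` gives `c = c * ∫ q g`; this needs no integrability,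
since `∫ c * h = c * ∫ h` holds also for the junk value of a non-integrable `h`. -/
theorem integral_mul_eq_one_of_ae_eq_integral_mul {Ω : Type*} [MeasurableSpace Ω]
    {μ : Measure Ω} {q ζ g : Ω → ℝ}
    (hζ : ∀ᵐ ω ∂μ, ζ ω = (∫ ω', q ω' * ζ ω' ∂μ) * g ω)
    (hc : ∫ ω, q ω * ζ ω ∂μ ≠ 0) :
    ∫ ω, q ω * g ω ∂μ = 1 := by
  set c := ∫ ω, q ω * ζ ω ∂μ
  have hself : c * 1 = c * ∫ ω, q ω * g ω ∂μ := calc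
    c * 1 = ∫ ω, c * (q ω * g ω) ∂μ := by
      rw [mul_one]
      refine integral_congr_ae ?_
      filter_upwards [hζ] with ω hω
      rw [hω]
      ring
    _ = c * ∫ ω, q ω * g ω ∂μ := integral_const_mul c _
  exact (mul_left_cancel₀ hc hself).symm

theorem stmt_17_general
    {Ω : Type*} [MeasurableSpace Ω] (μ : Measure Ω)
    (q β γ f : Ω → ℝ)
    (lam : ℝ) (ζ : Ω → ℝ)
    (heig : ∀ᵐ ω ∂μ,
      f ω * β ω * (∫ ω', q ω' * ζ ω' ∂μ) - γ ω * ζ ω = lam * ζ ω) :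
    ((∫ ω', q ω' * ζ ω' ∂μ) = 0 → ∀ᵐ ω ∂μ, (γ ω + lam) * ζ ω = 0) ∧
    ((∫ ω', q ω' * ζ ω' ∂μ) ≠ 0 → (∀ᵐ ω ∂μ, γ ω + lam ≠ 0) →
      ((∀ᵐ ω ∂μ,
          ζ ω = (∫ ω', q ω' * ζ ω' ∂μ) * (f ω * β ω / (γ ω + lam))) ∧
        (∫ ω, q ω * f ω * (β ω / (γ ω + lam)) ∂μ) = 1)) := by
  set c := ∫ ω', q ω' * ζ ω' ∂μ
  have hres : ∀ᵐ ω ∂μ, (γ ω + lam) * ζ ω = f ω * β ω * c := by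
    filter_upwards [heig] with ω hω
    linear_combination -hω
  refine ⟨fun hc => ?_, fun hc hne => ?_⟩
  · filter_upwards [hres] with ω hω
    rw [hω, hc, mul_zero]
  · have hζ : ∀ᵐ ω ∂μ, ζ ω = c * (f ω * β ω / (γ ω + lam)) := by
      filter_upwards [hres, hne] with ω hω hω'
      rw [mul_div_assoc', eq_div_iff hω']
      linear_combination hω
    refine ⟨hζ, ?_⟩
    simpa only [mul_assoc, mul_div_assoc] using
      integral_mul_eq_one_of_ae_eq_integral_mul hζ hc

/-- Eigenvalue equation for the linearisation `(Tζ)(ω) = f(ω)β(ω)∫ q ζ dμ − γ(ω)ζ(ω)`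
on `L²(Ω,μ)`: if `ζ ≠ 0` in `L²` satisfies `Tζ = λζ`, then (i) if `∫ q ζ dμ = 0` then
`(γ(ω)+λ)ζ(ω) = 0` a.e.; (ii) if `∫ q ζ dμ ≠ 0` and `γ(ω)+λ ≠ 0` a.e., then
`ζ(ω) = (∫ q ζ dμ) f(ω)β(ω)/(γ(ω)+λ)` a.e. and `∫ q f β/(γ+λ) dμ = 1`. -/
theorem stmt_17
    {Ω : Type*} [MeasurableSpace Ω] (μ : Measure Ω) [IsProbabilityMeasure μ]
    (q β γ f : Ω → ℝ)
    (hmq : Measurable q) (hmβ : Measurable β) (hmγ : Measurable γ)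
    (hmf : Measurable f)
    (h0q : ∀ ω, 0 ≤ q ω) (h0β : ∀ ω, 0 ≤ β ω) (h0γ : ∀ ω, 0 ≤ γ ω)
    (h0f : ∀ ω, 0 ≤ f ω)
    (M : ℝ) (hbq : ∀ ω, q ω ≤ M) (hbβ : ∀ ω, β ω ≤ M) (hbγ : ∀ ω, γ ω ≤ M)
    (hfL2 : MemLp f 2 μ)
    (hfint : ∫ ω, f ω ∂μ = 1) (hqfint : ∫ ω, q ω * f ω ∂μ = 1)
    (hqpos : ∀ᵐ ω ∂μ, 0 < q ω)
    (ε : ℝ) (hε : 0 < ε) (hβε : ∀ ω, ε ≤ β ω) (hγε : ∀ ω, ε ≤ γ ω)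
    (lam : ℝ) (ζ : Ω → ℝ) (hζL2 : MemLp ζ 2 μ) (hζne : ¬ (ζ =ᵐ[μ] 0))
    (heig : ∀ᵐ ω ∂μ,
      f ω * β ω * (∫ ω', q ω' * ζ ω' ∂μ) - γ ω * ζ ω = lam * ζ ω) :
    ((∫ ω', q ω' * ζ ω' ∂μ) = 0 → ∀ᵐ ω ∂μ, (γ ω + lam) * ζ ω = 0) ∧
    ((∫ ω', q ω' * ζ ω' ∂μ) ≠ 0 → (∀ᵐ ω ∂μ, γ ω + lam ≠ 0) →
      ((∀ᵐ ω ∂μ,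
          ζ ω = (∫ ω', q ω' * ζ ω' ∂μ) * (f ω * β ω / (γ ω + lam))) ∧
        (∫ ω, q ω * f ω * (β ω / (γ ω + lam)) ∂μ) = 1)) :=
  stmt_17_general μ q β γ f lam ζ heig
end

section
/- Let γ₀ = inf_{ω ∈ Ω} γ(ω) and define Φ : (−γ₀, ∞) → ℝ by Φ(λ) = ∫_Ω q(ω) f(ω) β(ω)/(γ(ω) + λ) dμ(ω). Then Φ is strictly decreasing on (−γ₀, ∞) and Φ(0) = R₀, where R₀ = ∫_Ω q(ω) f(ω) β(ω)/γ(ω) dμ(ω). Consequently the equation Φ(λ) = 1 has at most one solution λ in (−γ₀, ∞), and any such solution satisfies: λ > 0 if and only if R₀ > 1, λ = 0 if and only if R₀ = 1, and λ < 0 if and only if R₀ < 1. -/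
open MeasureTheory Filter Set Topology

/-!
For each `ω` the map `λ ↦ β ω / (γ ω + λ)` is strictly decreasing on `(-γ₀, ∞)`, and averaging
against the weight `q f ≥ 0` keeps the strictness because `∫ q f = 1` forces `q f > 0` on a set
of positive measure. The sign of a root of `Φ λ = 1` is then read off by comparing
`Φ λ = 1` with `Φ 0 = R₀`.
-/

section WeightedIntegral

variable {Ω : Type*} [MeasurableSpace Ω] {μ : Measure Ω} {w : Ω → ℝ}

theorem integral_mul_lt_integral_mul_of_integral_pos {g₁ g₂ : Ω → ℝ} (hw : 0 ≤ w)
    (hw_pos : 0 < ∫ ω, w ω ∂μ) (h₁ : Integrable (fun ω => w ω * g₁ ω) μ)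
    (h₂ : Integrable (fun ω => w ω * g₂ ω) μ) (hlt : ∀ ω, g₁ ω < g₂ ω) :
    ∫ ω, w ω * g₁ ω ∂μ < ∫ ω, w ω * g₂ ω ∂μ := by
  have hsupp : Function.support (fun ω => w ω * g₂ ω - w ω * g₁ ω) = Function.support w := by
    ext ω
    simp [← mul_sub, (sub_pos.2 (hlt ω)).ne']
  have hnonneg : 0 ≤ fun ω => w ω * g₂ ω - w ω * g₁ ω := fun ω => by
    simpa only [Pi.zero_apply, ← mul_sub] using mul_nonneg (hw ω) (sub_pos.2 (hlt ω)).le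
  rw [← sub_pos, ← integral_sub h₂ h₁, integral_pos_iff_support_of_nonneg hnonneg (h₂.sub h₁),
    hsupp, ← integral_pos_iff_support_of_nonneg hw (Integrable.of_integral_ne_zero hw_pos.ne')]
  exact hw_pos

theorem MeasureTheory.Integrable.mul_div_of_abs_le_of_le {β γ : Ω → ℝ} {M c : ℝ}
    (hw : Integrable w μ) (hβ : AEStronglyMeasurable β μ) (hγ : AEStronglyMeasurable γ μ)
    (hc : 0 < c) (hβM : ∀ ω, |β ω| ≤ M) (hγc : ∀ ω, c ≤ γ ω) :
    Integrable (fun ω => w ω * (β ω / γ ω)) μ :=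
  hw.mul_bdd (hβ.div₀ hγ) <| ae_of_all _ fun ω => by
    rw [norm_div, Real.norm_eq_abs, Real.norm_of_nonneg (hc.trans_le (hγc ω)).le]
    exact div_le_div₀ ((abs_nonneg _).trans (hβM ω)) (hβM ω) hc (hγc ω)

theorem strictAntiOn_integral_mul_div_add {β γ : Ω → ℝ} {M γ₀ : ℝ} (hw : 0 ≤ w)
    (hw_pos : 0 < ∫ ω, w ω ∂μ) (hβ_meas : AEStronglyMeasurable β μ)
    (hγ_meas : AEStronglyMeasurable γ μ) (hβ_pos : ∀ ω, 0 < β ω) (hβM : ∀ ω, β ω ≤ M)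
    (hγ₀ : ∀ ω, γ₀ ≤ γ ω) :
    StrictAntiOn (fun lam => ∫ ω, w ω * (β ω / (γ ω + lam)) ∂μ) (Ioi (-γ₀)) := by
  have hint (lam : ℝ) (hlam : lam ∈ Ioi (-γ₀)) :
      Integrable (fun ω => w ω * (β ω / (γ ω + lam))) μ :=
    (Integrable.of_integral_ne_zero hw_pos.ne' : Integrable w μ).mul_div_of_abs_le_of_le
      hβ_meas (hγ_meas.add_const lam) (neg_lt_iff_pos_add'.1 hlam)
      (fun ω => (abs_of_pos (hβ_pos ω)).trans_le (hβM ω))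
      (fun ω => add_le_add_left (hγ₀ ω) lam)
  intro l₁ h₁ l₂ h₂ hl
  refine integral_mul_lt_integral_mul_of_integral_pos hw hw_pos (hint l₂ h₂) (hint l₁ h₁)
    fun ω => div_lt_div_of_pos_left (hβ_pos ω) ?_ (by linarith)
  linarith [hγ₀ ω, mem_Ioi.1 h₁]

end WeightedIntegral

theorem stmt_18_general
    {Ω : Type*} [MeasurableSpace Ω] (μ : Measure Ω) [IsProbabilityMeasure μ]
    (q β γ f : Ω → ℝ)
    (hmβ : Measurable β) (hmγ : Measurable γ)
    (h0q : ∀ ω, 0 ≤ q ω)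
    (h0f : ∀ ω, 0 ≤ f ω)
    (M : ℝ) (hbβ : ∀ ω, β ω ≤ M)
    (hqfint : ∫ ω, q ω * f ω ∂μ = 1)
    (ε : ℝ) (hε : 0 < ε) (hβε : ∀ ω, ε ≤ β ω) (hγε : ∀ ω, ε ≤ γ ω)
    (γ₀ : ℝ) (hγ₀ : γ₀ = ⨅ ω, γ ω)
    (Φ : ℝ → ℝ)
    (hΦ : ∀ lam, Φ lam = ∫ ω, q ω * f ω * (β ω / (γ ω + lam)) ∂μ)
    (R₀ : ℝ) (hR₀ : R₀ = ∫ ω, q ω * f ω * (β ω / γ ω) ∂μ) :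
    StrictAntiOn Φ (Ioi (-γ₀)) ∧
    Φ 0 = R₀ ∧
    (∀ l₁ ∈ Ioi (-γ₀), ∀ l₂ ∈ Ioi (-γ₀), Φ l₁ = 1 → Φ l₂ = 1 → l₁ = l₂) ∧
    (∀ lam ∈ Ioi (-γ₀), Φ lam = 1 →
      ((0 < lam ↔ 1 < R₀) ∧ (lam = 0 ↔ R₀ = 1) ∧ (lam < 0 ↔ R₀ < 1))) := by
  have := nonempty_of_isProbabilityMeasure μ
  have hγ₀_le (ω : Ω) : γ₀ ≤ γ ω := hγ₀ ▸ ciInf_le ⟨ε, forall_mem_range.2 hγε⟩ ω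
  have h0 : (0 : ℝ) ∈ Ioi (-γ₀) := by
    have : ε ≤ γ₀ := hγ₀ ▸ le_ciInf hγε
    rw [mem_Ioi]
    linarith
  have hanti : StrictAntiOn Φ (Ioi (-γ₀)) := by
    rw [show Φ = _ from funext hΦ]
    exact strictAntiOn_integral_mul_div_add (w := fun ω => q ω * f ω)
      (fun ω => mul_nonneg (h0q ω) (h0f ω)) (hqfint ▸ one_pos) hmβ.aestronglyMeasurable
      hmγ.aestronglyMeasurable (fun ω => hε.trans_le (hβε ω)) hbβ hγ₀_le
  have hΦ0 : Φ 0 = R₀ := by simp only [hΦ, add_zero, hR₀]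
  refine ⟨hanti, hΦ0, fun l₁ h₁ l₂ h₂ e₁ e₂ => hanti.injOn h₁ h₂ (e₁.trans e₂.symm),
    fun lam hlam hlam1 => ?_⟩
  rw [← hΦ0, ← hlam1]
  exact ⟨(hanti.lt_iff_gt hlam h0).symm, (hanti.eq_iff_eq h0 hlam).symm,
    (hanti.lt_iff_gt h0 hlam).symm⟩

/-- Let `γ₀ = inf γ` and `Φ(λ) = ∫ q f β/(γ+λ) dμ` on `(−γ₀,∞)`. Then `Φ` is
strictly decreasing there, `Φ(0) = R₀`, the equation `Φ(λ) = 1` has at most one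
solution in `(−γ₀,∞)`, and any such solution satisfies `λ > 0 ↔ R₀ > 1`,
`λ = 0 ↔ R₀ = 1`, `λ < 0 ↔ R₀ < 1`. -/
theorem stmt_18
    {Ω : Type*} [MeasurableSpace Ω] (μ : Measure Ω) [IsProbabilityMeasure μ]
    (q β γ f : Ω → ℝ)
    (hmq : Measurable q) (hmβ : Measurable β) (hmγ : Measurable γ)
    (hmf : Measurable f)
    (h0q : ∀ ω, 0 ≤ q ω) (h0β : ∀ ω, 0 ≤ β ω) (h0γ : ∀ ω, 0 ≤ γ ω)
    (h0f : ∀ ω, 0 ≤ f ω)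
    (M : ℝ) (hbq : ∀ ω, q ω ≤ M) (hbβ : ∀ ω, β ω ≤ M) (hbγ : ∀ ω, γ ω ≤ M)
    (hbf : ∀ ω, f ω ≤ M)
    (hfint : ∫ ω, f ω ∂μ = 1) (hqfint : ∫ ω, q ω * f ω ∂μ = 1)
    (hqpos : ∀ᵐ ω ∂μ, 0 < q ω)
    (ε : ℝ) (hε : 0 < ε) (hβε : ∀ ω, ε ≤ β ω) (hγε : ∀ ω, ε ≤ γ ω)
    (γ₀ : ℝ) (hγ₀ : γ₀ = ⨅ ω, γ ω)
    (Φ : ℝ → ℝ)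
    (hΦ : ∀ lam, Φ lam = ∫ ω, q ω * f ω * (β ω / (γ ω + lam)) ∂μ)
    (R₀ : ℝ) (hR₀ : R₀ = ∫ ω, q ω * f ω * (β ω / γ ω) ∂μ) :
    StrictAntiOn Φ (Ioi (-γ₀)) ∧
    Φ 0 = R₀ ∧
    (∀ l₁ ∈ Ioi (-γ₀), ∀ l₂ ∈ Ioi (-γ₀), Φ l₁ = 1 → Φ l₂ = 1 → l₁ = l₂) ∧
    (∀ lam ∈ Ioi (-γ₀), Φ lam = 1 →
      ((0 < lam ↔ 1 < R₀) ∧ (lam = 0 ↔ R₀ = 1) ∧ (lam < 0 ↔ R₀ < 1))) :=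
  stmt_18_general μ q β γ f hmβ hmγ h0q h0f M hbβ hqfint ε hε hβε hγε γ₀ hγ₀ Φ hΦ R₀ hR₀
end
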